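/- arXiv:2204.06027 — 6 statements merged into one kernel-verified Lean document; each statement's English description precedes it below -/
import Mathlib

section
/- Let Sq be a square double complex of complex vector spaces. Then for all integers p, q, k, the k-th cohomology of the Schweitzer complex of Sq vanishes: H^k(L_{p,q}(Sq)) = 0. -/
open DirectSum

/-- A double complex of complex vector spaces: a family of `ℂ`-vector spaces `X r s`
(`r, s ∈ ℤ`) with differentials `∂ : X r s → X (r+1) s` and `∂̄ : X r s → X r (s+1)`
satisfying `∂∘∂ = 0`, `∂̄∘∂̄ = 0` and `∂∘∂̄ + ∂̄∘∂ = 0`. -/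
structure DoubleComplex : Type 1 where
  X : ℤ → ℤ → Type
  [acg : ∀ r s, AddCommGroup (X r s)]
  [mod : ∀ r s, Module ℂ (X r s)]
  d1 : ∀ r s, X r s →ₗ[ℂ] X (r + 1) s
  d2 : ∀ r s, X r s →ₗ[ℂ] X r (s + 1)
  d1_d1 : ∀ r s (x : X r s), d1 (r + 1) s (d1 r s x) = 0
  d2_d2 : ∀ r s (x : X r s), d2 r (s + 1) (d2 r s x) = 0
  anticomm : ∀ r s (x : X r s), d1 r (s + 1) (d2 r s x) + d2 (r + 1) s (d1 r s x) = 0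

attribute [instance] DoubleComplex.acg DoubleComplex.mod

/-- The bidegrees contributing to the degree-`k` piece of the Schweitzer complex `L_{p,q}`:
for `k ≤ p+q-2` the bidegrees `(r,s)` with `r+s = k`, `r < p`, `s < q`; for `k ≥ p+q-1`
the bidegrees `(r,s)` with `r+s = k+1`, `r ≥ p`, `s ≥ q`. -/
def schwCond (p q k : ℤ) (rs : ℤ × ℤ) : Prop :=
  (k ≤ p + q - 2 ∧ rs.1 + rs.2 = k ∧ rs.1 < p ∧ rs.2 < q) ∨
  (p + q - 1 ≤ k ∧ rs.1 + rs.2 = k + 1 ∧ p ≤ rs.1 ∧ q ≤ rs.2)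

instance (p q k : ℤ) : DecidablePred (schwCond p q k) := fun rs => by
  unfold schwCond; infer_instance

/-- Index type for the degree-`k` piece of the Schweitzer complex. -/
abbrev SchwIdx (p q k : ℤ) := {rs : ℤ × ℤ // schwCond p q k rs}

/-- The degree-`k` piece of the Schweitzer complex `L_{p,q}(A)`. -/
abbrev SchwL (A : DoubleComplex) (p q k : ℤ) : Type :=
  ⨁ i : SchwIdx p q k, A.X i.1.1 i.1.2

/-- The differential of the Schweitzer complex: in degrees `k ≤ p+q-3` the total
differential `∂ + ∂̄` followed by the projection to the components of `L^{k+1}`;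
in degree `p+q-2` the map `∂∂̄ : A^{p-1,q-1} → A^{p,q}`; in degrees `k ≥ p+q-1`
the total differential `∂ + ∂̄`. -/
noncomputable def schwD (A : DoubleComplex) (p q k : ℤ) :
    SchwL A p q k →ₗ[ℂ] SchwL A p q (k + 1) :=
  DirectSum.toModule ℂ _ _ fun i =>
    if _hk : k = p + q - 2 then
      (DirectSum.lof ℂ (SchwIdx p q (k + 1)) (fun j => A.X j.1.1 j.1.2)
        ⟨(i.1.1 + 1, i.1.2 + 1), by
          obtain ⟨⟨r, s⟩, hi⟩ := i
          simp only [schwCond] at hi ⊢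
          omega⟩).comp ((A.d1 i.1.1 (i.1.2 + 1)).comp (A.d2 i.1.1 i.1.2))
    else
      (if h : schwCond p q (k + 1) (i.1.1 + 1, i.1.2) then
        (DirectSum.lof ℂ (SchwIdx p q (k + 1)) (fun j => A.X j.1.1 j.1.2)
          ⟨(i.1.1 + 1, i.1.2), h⟩).comp (A.d1 i.1.1 i.1.2)
       else 0)
      +
      (if h : schwCond p q (k + 1) (i.1.1, i.1.2 + 1) then
        (DirectSum.lof ℂ (SchwIdx p q (k + 1)) (fun j => A.X j.1.1 j.1.2)
          ⟨(i.1.1, i.1.2 + 1), h⟩).comp (A.d2 i.1.1 i.1.2)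
       else 0)

/-- Transport of the pieces of the Schweitzer complex along an equality of degrees. -/
def schwLCast (A : DoubleComplex) (p q : ℤ) {k k' : ℤ} (h : k = k') :
    SchwL A p q k ≃ₗ[ℂ] SchwL A p q k' := by subst h; exact LinearEquiv.refl ℂ _

/-- The differential of the Schweitzer complex arriving in degree `k`. -/
noncomputable def schwDFrom (A : DoubleComplex) (p q k : ℤ) :
    SchwL A p q (k - 1) →ₗ[ℂ] SchwL A p q k :=
  (schwLCast A p q (by omega : k - 1 + 1 = k)).toLinearMap.comp (schwD A p q (k - 1))

/-- The `k`-th cohomology of the Schweitzer complex `L_{p,q}(A)`: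
`ker(d^k) / im(d^{k-1})`. -/
noncomputable abbrev SchwCoh (A : DoubleComplex) (p q k : ℤ) : Type :=
  LinearMap.ker (schwD A p q k) ⧸
    Submodule.comap (LinearMap.ker (schwD A p q k)).subtype
      (LinearMap.range (schwDFrom A p q k))

/-!
Relative to `(p, q)`, each corner `(r, s)` of the square is lower (`r < p`, `s < q`), upper
(`p ≤ r`, `q ≤ s`), or absent from `L_{p,q}`. Accordingly the Schweitzer complex of the square
is zero, or a two-term complex whose differential is one of the isomorphisms `∂`, `∂̄` or
`∂∂̄` between two corners, or (when all four corners lie on the same side) a shift of the total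
complex of the square. The latter is exact because `∂` is bijective on both horizontal edges
and `∂∂̄ = -∂̄∂`.
-/

namespace DirectSum

variable {R : Type*} [Semiring R] {ι κ : Type*} [DecidableEq ι]
  {M : ι → Type*} [∀ i, AddCommMonoid (M i)] [∀ i, Module R (M i)]
  {N : κ → Type*} [∀ j, AddCommMonoid (N j)] [∀ j, Module R (N j)]

theorem of_apply_eq_self {i₀ : ι} (hM : ∀ i ≠ i₀, Subsingleton (M i)) (x : ⨁ i, M i) :
    of M i₀ (x i₀) = x := by
  ext i
  by_cases hi : i = i₀
  · subst hi; rw [of_eq_same]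
  · exact (hM i hi).elim _ _

theorem of_apply_add_of_apply_eq_self {i₁ i₂ : ι} (hne : i₁ ≠ i₂)
    (hM : ∀ i, i ≠ i₁ → i ≠ i₂ → Subsingleton (M i)) (x : ⨁ i, M i) :
    of M i₁ (x i₁) + of M i₂ (x i₂) = x := by
  ext i
  rw [add_apply]
  by_cases h₁ : i = i₁
  · subst h₁; rw [of_eq_same, of_eq_of_ne _ _ _ hne, add_zero]
  by_cases h₂ : i = i₂
  · subst h₂; rw [of_eq_same, of_eq_of_ne _ _ _ h₁, zero_add]
  exact (hM i h₁ h₂).elim _ _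

theorem ker_eq_bot_of_injective_component (D : (⨁ i, M i) →ₗ[R] ⨁ j, N j) {i₀ : ι}
    (hM : ∀ i ≠ i₀, Subsingleton (M i)) {j₀ : κ} {f : M i₀ → N j₀} (hf : f.Injective)
    (hD : ∀ u, D (of M i₀ u) j₀ = f u) : LinearMap.ker D = ⊥ := by
  refine LinearMap.ker_eq_bot'.2 fun x hx => ?_
  rw [← of_apply_eq_self hM x] at hx ⊢
  have hf0 : f (x i₀) = f 0 := by
    rw [← hD, ← hD, hx]; simp only [map_zero, zero_apply]
  rw [hf hf0, map_zero]

theorem range_eq_top_of_surjective_component [DecidableEq κ] (D : (⨁ i, M i) →ₗ[R] ⨁ j, N j)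
    {j₀ : κ} (hN : ∀ j ≠ j₀, Subsingleton (N j)) {i₀ : ι} {f : M i₀ → N j₀} (hf : f.Surjective)
    (hD : ∀ w, D (of M i₀ w) j₀ = f w) : LinearMap.range D = ⊤ := by
  refine LinearMap.range_eq_top.2 fun x => ?_
  obtain ⟨w, hw⟩ := hf (x j₀)
  refine ⟨of M i₀ w, ?_⟩
  rw [← of_apply_eq_self hN (D _), ← of_apply_eq_self hN x, hD, hw]

theorem ker_le_range_of_components [DecidableEq κ] {τ : Type*} [DecidableEq τ] {P : τ → Type*}
    [∀ l, AddCommGroup (P l)] [∀ l, Module R (P l)]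
    (D₁ : (⨁ i, M i) →ₗ[R] ⨁ j, N j) (D₂ : (⨁ j, N j) →ₗ[R] ⨁ l, P l)
    {i₀ : ι} {j₁ j₂ : κ} (hj : j₁ ≠ j₂) (hN : ∀ j, j ≠ j₁ → j ≠ j₂ → Subsingleton (N j))
    {l₀ : τ} {f : M i₀ → N j₁} {g : M i₀ → N j₂} {f' : N j₂ → P l₀} {g' : N j₁ → P l₀}
    (hf : f.Bijective) (hf' : f'.Injective) (hcomm : ∀ w, f' (g w) + g' (f w) = 0)
    (hD₁f : ∀ w, D₁ (of M i₀ w) j₁ = f w) (hD₁g : ∀ w, D₁ (of M i₀ w) j₂ = g w)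
    (hD₂g' : ∀ u, D₂ (of N j₁ u) l₀ = g' u) (hD₂f' : ∀ v, D₂ (of N j₂ v) l₀ = f' v) :
    LinearMap.ker D₂ ≤ LinearMap.range D₁ := by
  intro x hx
  have hx_eq := (of_apply_add_of_apply_eq_self hj hN x).symm
  have hcycle : f' (x j₂) + g' (x j₁) = 0 := by
    have := DFunLike.congr_fun (LinearMap.mem_ker.1 hx) l₀
    rw [hx_eq, map_add, add_apply, hD₂g', hD₂f', zero_apply] at this
    rwa [add_comm]
  obtain ⟨w, hw⟩ := hf.2 (x j₁)
  have hgw : g w = x j₂ := hf' (add_right_cancel ((hcomm w).trans (hw ▸ hcycle.symm)))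
  refine ⟨of M i₀ w, ?_⟩
  rw [← of_apply_add_of_apply_eq_self hj hN (D₁ _), hD₁f, hD₁g, hw, hgw, ← hx_eq]

end DirectSum

section Schweitzer

variable {A : DoubleComplex} {p q : ℤ}

theorem schwCond_iff {k r s : ℤ} : schwCond p q k (r, s) ↔
    (r + s = k ∧ r < p ∧ s < q) ∨ (r + s = k + 1 ∧ p ≤ r ∧ q ≤ s) := by
  unfold schwCond; omega

theorem schwCond.degree_eq {k k' : ℤ} {rs : ℤ × ℤ} (h : schwCond p q k rs)
    (h' : schwCond p q k' rs) : k = k' := by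
  unfold schwCond at h h'; omega

theorem schwD_of_apply_d1 {k r s : ℤ} (hk : k ≠ p + q - 2) (hc : schwCond p q k (r, s))
    (hc' : schwCond p q (k + 1) (r + 1, s)) (u : A.X r s) :
    schwD A p q k (of _ ⟨(r, s), hc⟩ u) ⟨(r + 1, s), hc'⟩ = A.d1 r s u := by
  have hne : ∀ h, (⟨(r + 1, s), hc'⟩ : SchwIdx p q (k + 1)) ≠ ⟨(r, s + 1), h⟩ := by
    simp only [ne_eq, Subtype.mk.injEq, Prod.mk.injEq]; omega
  rw [← lof_eq_of ℂ, schwD, toModule_lof, dif_neg hk, dif_pos hc', LinearMap.add_apply,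
    DirectSum.add_apply, LinearMap.comp_apply, lof_eq_of, of_eq_same]
  split_ifs with h
  · rw [LinearMap.comp_apply, lof_eq_of, of_eq_of_ne _ _ _ (hne h), add_zero]
  · rw [LinearMap.zero_apply, DirectSum.zero_apply, add_zero]

theorem schwD_of_apply_d2 {k r s : ℤ} (hk : k ≠ p + q - 2) (hc : schwCond p q k (r, s))
    (hc' : schwCond p q (k + 1) (r, s + 1)) (u : A.X r s) :
    schwD A p q k (of _ ⟨(r, s), hc⟩ u) ⟨(r, s + 1), hc'⟩ = A.d2 r s u := by
  have hne : ∀ h, (⟨(r, s + 1), hc'⟩ : SchwIdx p q (k + 1)) ≠ ⟨(r + 1, s), h⟩ := by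
    simp only [ne_eq, Subtype.mk.injEq, Prod.mk.injEq]; omega
  rw [← lof_eq_of ℂ, schwD, toModule_lof, dif_neg hk, dif_pos hc', LinearMap.add_apply,
    DirectSum.add_apply, LinearMap.comp_apply, lof_eq_of, of_eq_same]
  split_ifs with h
  · rw [LinearMap.comp_apply, lof_eq_of, of_eq_of_ne _ _ _ (hne h), zero_add]
  · rw [LinearMap.zero_apply, DirectSum.zero_apply, zero_add]

theorem schwD_of_apply_d1_d2 {k r s : ℤ} (hk : k = p + q - 2) (hc : schwCond p q k (r, s))
    (hc' : schwCond p q (k + 1) (r + 1, s + 1)) (u : A.X r s) :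
    schwD A p q k (of _ ⟨(r, s), hc⟩ u) ⟨(r + 1, s + 1), hc'⟩ = A.d1 r (s + 1) (A.d2 r s u) := by
  rw [← lof_eq_of ℂ, schwD, toModule_lof, dif_pos hk, LinearMap.comp_apply, lof_eq_of,
    of_eq_same]
  rfl

theorem range_schwDFrom_add_one (k : ℤ) :
    LinearMap.range (schwDFrom A p q (k + 1)) = LinearMap.range (schwD A p q k) := by
  -- `k + 1 - 1` is not `k` definitionally; generalizing it lets the cast reduce to the identity.
  suffices ∀ k' (h : k' = k), LinearMap.range
      ((schwLCast A p q (congrArg (· + 1) h : k' + 1 = k + 1)).toLinearMap ∘ₗ schwD A p q k') =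
      LinearMap.range (schwD A p q k) from this _ (add_sub_cancel_right k 1)
  rintro k' rfl
  rfl

variable (A p q) in
def SchwExactAt (k : ℤ) : Prop :=
  LinearMap.ker (schwD A p q (k + 1)) ≤ LinearMap.range (schwD A p q k)

theorem subsingleton_schwCoh_add_one_iff {k : ℤ} :
    Subsingleton (SchwCoh A p q (k + 1)) ↔ SchwExactAt A p q k := by
  rw [Submodule.Quotient.subsingleton_iff, Submodule.comap_subtype_eq_top,
    range_schwDFrom_add_one]
  rfl

theorem schwExactAt_of_subsingleton {k : ℤ} [Subsingleton (SchwL A p q (k + 1))] :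
    SchwExactAt A p q k := fun x _ => Subsingleton.elim 0 x ▸ zero_mem _

variable (A p q) in
def SchwSupportedOn (S : Set (ℤ × ℤ)) : Prop :=
  ∀ k (j : SchwIdx p q k), j.1 ∉ S → Subsingleton (A.X j.1.1 j.1.2)

namespace SchwSupportedOn

variable {S : Set (ℤ × ℤ)}

theorem subsingleton_schwL (hS : SchwSupportedOn A p q S) {k : ℤ}
    (h : ∀ rs ∈ S, ¬schwCond p q k rs) : Subsingleton (SchwL A p q k) :=
  ⟨fun _ _ => DFinsupp.ext fun j => (hS k j fun hj => h _ hj j.2).elim _ _⟩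

theorem subsingleton_of_ne (hS : SchwSupportedOn A p q S) {k : ℤ} {i : SchwIdx p q k}
    (hi : ∀ rs ∈ S, schwCond p q k rs → rs = i.1) (j : SchwIdx p q k) (hj : j ≠ i) :
    Subsingleton (A.X j.1.1 j.1.2) :=
  hS k j fun h => hj (Subtype.ext (hi _ h j.2))

theorem subsingleton_of_ne_of_ne (hS : SchwSupportedOn A p q S) {k : ℤ}
    {i₁ i₂ : SchwIdx p q k} (hi : ∀ rs ∈ S, schwCond p q k rs → rs = i₁.1 ∨ rs = i₂.1)
    (j : SchwIdx p q k) (hj₁ : j ≠ i₁) (hj₂ : j ≠ i₂) : Subsingleton (A.X j.1.1 j.1.2) :=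
  hS k j fun h => (hi _ h j.2).elim (fun e => hj₁ (Subtype.ext e)) fun e => hj₂ (Subtype.ext e)

end SchwSupportedOn

theorem schwExactAt_of_two_corners {r s r' s' m : ℤ}
    (hS : SchwSupportedOn A p q {(r, s), (r', s')}) (hc : schwCond p q m (r, s))
    (hc' : schwCond p q (m + 1) (r', s')) {f : A.X r s → A.X r' s'} (hf : f.Bijective)
    (hD : ∀ u, schwD A p q m (of _ ⟨(r, s), hc⟩ u) ⟨(r', s'), hc'⟩ = f u) (k : ℤ) :
    SchwExactAt A p q k := by
  have hdeg : ∀ n, ∀ rs ∈ ({(r, s), (r', s')} : Set (ℤ × ℤ)), schwCond p q n rs →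
      (n = m ∧ rs = (r, s)) ∨ (n = m + 1 ∧ rs = (r', s')) := by
    rintro n rs (rfl | rfl) hn
    exacts [.inl ⟨hn.degree_eq hc, rfl⟩, .inr ⟨hn.degree_eq hc', rfl⟩]
  by_cases hk : k + 1 = m
  · subst hk
    have hker := DirectSum.ker_eq_bot_of_injective_component (schwD A p q (k + 1))
      (hS.subsingleton_of_ne fun rs hrs hn => ?_) hf.1 hD
    · rw [SchwExactAt, hker]
      exact bot_le
    · rcases hdeg _ rs hrs hn with h | h
      exacts [h.2, by omega]
  by_cases hk' : k = m
  · subst hk'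
    rw [SchwExactAt, DirectSum.range_eq_top_of_surjective_component (schwD A p q k)
      (hS.subsingleton_of_ne fun rs hrs hn => ?_) hf.2 hD]
    · exact le_top
    · rcases hdeg _ rs hrs hn with h | h
      exacts [by omega, h.2]
  · have := hS.subsingleton_schwL (k := k + 1) fun rs hrs hn => by
      rcases hdeg _ rs hrs hn with h | h <;> omega
    exact schwExactAt_of_subsingleton

def squareCorners (a b : ℤ) : Set (ℤ × ℤ) := {(a, b), (a + 1, b), (a, b + 1), (a + 1, b + 1)}

theorem schwExactAt_of_square {a b m : ℤ} (hS : SchwSupportedOn A p q (squareCorners a b))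
    (h₀₀ : schwCond p q m (a, b)) (h₁₁ : schwCond p q (m + 2) (a + 1, b + 1))
    (hd₀ : Function.Bijective (A.d1 a b)) (hd₁ : Function.Bijective (A.d1 a (b + 1))) (k : ℤ) :
    SchwExactAt A p q k := by
  have hdeg : ∀ n, ∀ rs ∈ squareCorners a b, schwCond p q n rs →
      (n = m ∧ rs = (a, b)) ∨ (n = m + 1 ∧ (rs = (a + 1, b) ∨ rs = (a, b + 1))) ∨
      (n = m + 2 ∧ rs = (a + 1, b + 1)) := by
    rw [schwCond_iff] at h₀₀ h₁₁
    rintro n rs (rfl | rfl | rfl | rfl) hn <;> rw [schwCond_iff] at hn <;>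
      simp only [Prod.mk.injEq, and_true, true_and, true_or, or_true] <;> omega
  have h₁₀ : schwCond p q (m + 1) (a + 1, b) := by
    rw [schwCond_iff] at *; omega
  have h₀₁ : schwCond p q (m + 1) (a, b + 1) := by
    rw [schwCond_iff] at *; omega
  have h₁₁' : schwCond p q (m + 1 + 1) (a + 1, b + 1) := by rwa [add_assoc]
  have hm : m ≠ p + q - 2 ∧ m + 1 ≠ p + q - 2 := by
    rw [schwCond_iff] at h₀₀ h₁₁; omega
  by_cases hk : k + 1 = m
  · subst hk
    rw [SchwExactAt, DirectSum.ker_eq_bot_of_injective_component (schwD A p q (k + 1))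
      (i₀ := ⟨_, h₀₀⟩) (j₀ := ⟨_, h₁₀⟩) (hS.subsingleton_of_ne fun rs hrs hn => ?_) hd₀.1
      (schwD_of_apply_d1 hm.1 h₀₀ h₁₀)]
    · exact bot_le
    · rcases hdeg _ rs hrs hn with h | h | h
      exacts [h.2, by omega, by omega]
  by_cases hk' : k = m
  · subst hk'
    refine DirectSum.ker_le_range_of_components (schwD A p q k) (schwD A p q (k + 1))
      (i₀ := ⟨_, h₀₀⟩) (j₁ := ⟨_, h₁₀⟩) (j₂ := ⟨_, h₀₁⟩) (l₀ := ⟨_, h₁₁'⟩) (by simp)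
      (hS.subsingleton_of_ne_of_ne fun rs hrs hn => ?_) hd₀ hd₁.1 (A.anticomm a b)
      (schwD_of_apply_d1 hm.1 h₀₀ h₁₀) (schwD_of_apply_d2 hm.1 h₀₀ h₀₁)
      (schwD_of_apply_d2 hm.2 h₁₀ h₁₁') (schwD_of_apply_d1 hm.2 h₀₁ h₁₁')
    rcases hdeg _ rs hrs hn with h | h | h
    exacts [by omega, h.2, by omega]
  by_cases hk'' : k = m + 1
  · subst hk''
    rw [SchwExactAt, DirectSum.range_eq_top_of_surjective_component (schwD A p q (m + 1))
      (j₀ := ⟨_, h₁₁'⟩) (i₀ := ⟨_, h₀₁⟩) (hS.subsingleton_of_ne fun rs hrs hn => ?_) hd₁.2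
      (schwD_of_apply_d1 hm.2 h₀₁ h₁₁')]
    · exact le_top
    · rcases hdeg _ rs hrs hn with h | h | h
      exacts [by omega, by omega, h.2]
  · have := hS.subsingleton_schwL (k := k + 1) fun rs hrs hn => by
      rcases hdeg _ rs hrs hn with h | h | h <;> omega
    exact schwExactAt_of_subsingleton

end Schweitzer

structure DoubleComplex.IsSquareAt (Sq : DoubleComplex) (a b : ℤ) : Prop where
  subsingleton : ∀ r s : ℤ, ¬((r = a ∨ r = a + 1) ∧ (s = b ∨ s = b + 1)) →
    Subsingleton (Sq.X r s)
  bijective_d1 : Function.Bijective (Sq.d1 a b)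
  bijective_d1_succ : Function.Bijective (Sq.d1 a (b + 1))
  bijective_d2 : Function.Bijective (Sq.d2 a b)
  bijective_d2_succ : Function.Bijective (Sq.d2 (a + 1) b)

namespace DoubleComplex.IsSquareAt

variable {Sq : DoubleComplex} {a b p q : ℤ}

theorem schwSupportedOn (hSq : Sq.IsSquareAt a b) :
    SchwSupportedOn Sq p q (squareCorners a b) := by
  rintro k ⟨⟨r, s⟩, _⟩ hrs
  refine hSq.subsingleton r s fun h => hrs ?_
  simp only [squareCorners, Set.mem_insert_iff, Set.mem_singleton_iff, Prod.mk.injEq]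
  omega

theorem schwSupportedOn_pair (hSq : Sq.IsSquareAt a b) {r₁ s₁ r₂ s₂ : ℤ}
    (h : ∀ n r s, (r = a ∨ r = a + 1) → (s = b ∨ s = b + 1) → schwCond p q n (r, s) →
      (r = r₁ ∧ s = s₁) ∨ (r = r₂ ∧ s = s₂)) :
    SchwSupportedOn Sq p q {(r₁, s₁), (r₂, s₂)} := by
  rintro n ⟨⟨r, s⟩, hn⟩ hrs
  refine hSq.subsingleton r s fun hc => hrs ?_
  simpa only [Set.mem_insert_iff, Set.mem_singleton_iff, Prod.mk.injEq] using h n r s hc.1 hc.2 hn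

theorem subsingleton_schwL (hSq : Sq.IsSquareAt a b) {k : ℤ}
    (h : ∀ r s, (r = a ∨ r = a + 1) → (s = b ∨ s = b + 1) → ¬schwCond p q k (r, s)) :
    Subsingleton (SchwL Sq p q k) :=
  ⟨fun _ _ => DFinsupp.ext fun j => (hSq.subsingleton _ _ fun hc => h _ _ hc.1 hc.2 j.2).elim _ _⟩

theorem schwExactAt (hSq : Sq.IsSquareAt a b) (k : ℤ) : SchwExactAt Sq p q k := by
  have cond : ∀ {n r s}, (r + s = n ∧ r < p ∧ s < q) ∨ (r + s = n + 1 ∧ p ≤ r ∧ q ≤ s) →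
      schwCond p q n (r, s) := schwCond_iff.2
  rcases (by omega : p ≤ a ∨ p = a + 1 ∨ a + 2 ≤ p) with hp | hp | hp <;>
    rcases (by omega : q ≤ b ∨ q = b + 1 ∨ b + 2 ≤ q) with hq | hq | hq
  · exact schwExactAt_of_square (m := a + b - 1) hSq.schwSupportedOn (cond (by omega))
      (cond (by omega)) hSq.bijective_d1 hSq.bijective_d1_succ k
  · exact schwExactAt_of_two_corners (m := a + b)
      (hSq.schwSupportedOn_pair fun n r s _ _ hn => by rw [schwCond_iff] at hn; omega)
      (cond (by omega)) (cond (by omega)) hSq.bijective_d1_succ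
      (schwD_of_apply_d1 (by omega) _ _) k
  · have : Subsingleton (SchwL Sq p q (k + 1)) := hSq.subsingleton_schwL fun r s _ _ hn => by
      rw [schwCond_iff] at hn; omega
    exact schwExactAt_of_subsingleton
  · exact schwExactAt_of_two_corners (m := a + b)
      (hSq.schwSupportedOn_pair fun n r s _ _ hn => by rw [schwCond_iff] at hn; omega)
      (cond (by omega)) (cond (by omega)) hSq.bijective_d2_succ
      (schwD_of_apply_d2 (by omega) _ _) k
  · exact schwExactAt_of_two_corners (m := a + b)
      (hSq.schwSupportedOn_pair fun n r s _ _ hn => by rw [schwCond_iff] at hn; omega)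
      (cond (by omega)) (cond (by omega)) (hSq.bijective_d1_succ.comp hSq.bijective_d2)
      (schwD_of_apply_d1_d2 (by omega) _ _) k
  · exact schwExactAt_of_two_corners (m := a + b)
      (hSq.schwSupportedOn_pair fun n r s _ _ hn => by rw [schwCond_iff] at hn; omega)
      (cond (by omega)) (cond (by omega)) hSq.bijective_d2
      (schwD_of_apply_d2 (by omega) _ _) k
  · have : Subsingleton (SchwL Sq p q (k + 1)) := hSq.subsingleton_schwL fun r s _ _ hn => by
      rw [schwCond_iff] at hn; omega
    exact schwExactAt_of_subsingleton
  · exact schwExactAt_of_two_corners (m := a + b)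
      (hSq.schwSupportedOn_pair fun n r s _ _ hn => by rw [schwCond_iff] at hn; omega)
      (cond (by omega)) (cond (by omega)) hSq.bijective_d1
      (schwD_of_apply_d1 (by omega) _ _) k
  · exact schwExactAt_of_square (m := a + b) hSq.schwSupportedOn (cond (by omega))
      (cond (by omega)) hSq.bijective_d1 hSq.bijective_d1_succ k

end DoubleComplex.IsSquareAt

theorem schwCoh_of_square_eq_zero_general (Sq : DoubleComplex) (r₀ s₀ : ℤ)
    (hzero : ∀ r s : ℤ, ¬((r = r₀ ∨ r = r₀ + 1) ∧ (s = s₀ ∨ s = s₀ + 1)) →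
      Subsingleton (Sq.X r s))
    (hd1a : Function.Bijective (Sq.d1 r₀ s₀))
    (hd1b : Function.Bijective (Sq.d1 r₀ (s₀ + 1)))
    (hd2a : Function.Bijective (Sq.d2 r₀ s₀))
    (hd2b : Function.Bijective (Sq.d2 (r₀ + 1) s₀)) :
    ∀ p q k : ℤ, Subsingleton (SchwCoh Sq p q k) := by
  intro p q k
  obtain ⟨k, rfl⟩ : ∃ k', k = k' + 1 := ⟨k - 1, (sub_add_cancel k 1).symm⟩
  rw [subsingleton_schwCoh_add_one_iff]
  exact DoubleComplex.IsSquareAt.schwExactAt ⟨hzero, hd1a, hd1b, hd2a, hd2b⟩ k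

/-- The Schweitzer complex of a square has vanishing cohomology in all degrees.
A square is a double complex concentrated in the four bidegrees
`(r₀,s₀), (r₀+1,s₀), (r₀,s₀+1), (r₀+1,s₀+1)`, one-dimensional (isomorphic to `ℂ`)
there, and whose four differentials between these components are isomorphisms. -/
theorem schwCoh_of_square_eq_zero (Sq : DoubleComplex) (r₀ s₀ : ℤ)
    (hone : ∀ r s : ℤ, (r = r₀ ∨ r = r₀ + 1) → (s = s₀ ∨ s = s₀ + 1) →
      Nonempty (Sq.X r s ≃ₗ[ℂ] ℂ))
    (hzero : ∀ r s : ℤ, ¬((r = r₀ ∨ r = r₀ + 1) ∧ (s = s₀ ∨ s = s₀ + 1)) →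
      Subsingleton (Sq.X r s))
    (hd1a : Function.Bijective (Sq.d1 r₀ s₀))
    (hd1b : Function.Bijective (Sq.d1 r₀ (s₀ + 1)))
    (hd2a : Function.Bijective (Sq.d2 r₀ s₀))
    (hd2b : Function.Bijective (Sq.d2 (r₀ + 1) s₀)) :
    ∀ p q k : ℤ, Subsingleton (SchwCoh Sq p q k) :=
  schwCoh_of_square_eq_zero_general Sq r₀ s₀ hzero hd1a hd1b hd2a hd2b
end

section
/- For any double complex A of complex vector spaces and any integers p, q, there is a natural isomorphism H^{p+q−1}(L_{p,q}(A)) ≅ (ker(∂ : A^{p,q} → A^{p+1,q}) ∩ ker(∂̄ : A^{p,q} → A^{p,q+1})) / im(∂∂̄ : A^{p−1,q−1} → A^{p,q}), i.e. the (p+q−1)-st cohomology of the Schweitzer complex is the Bott–Chern cohomology of A in bidegree (p,q). -/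
open DirectSum

/-- Transport of the components of a double complex along equalities of bidegrees. -/
noncomputable def DoubleComplex.castX (A : DoubleComplex) {r s r' s' : ℤ}
    (h1 : r = r') (h2 : s = s') : A.X r s ≃ₗ[ℂ] A.X r' s' := by
  subst h1; subst h2; exact LinearEquiv.refl ℂ _

/-- The operator `∂∂̄ : A^{p-1,q-1} → A^{p,q}`. -/
noncomputable def ddbar (A : DoubleComplex) (p q : ℤ) :
    A.X (p - 1) (q - 1) →ₗ[ℂ] A.X p q :=
  (A.castX (show p - 1 + 1 = p by omega) (show q - 1 + 1 = q by omega)).toLinearMap.comp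
    ((A.d1 (p - 1) (q - 1 + 1)).comp (A.d2 (p - 1) (q - 1)))

/-- The Bott–Chern cohomology of a double complex in bidegree `(p,q)`:
`(ker ∂ ∩ ker ∂̄) / im ∂∂̄` at `A^{p,q}`. -/
noncomputable abbrev BottChern (A : DoubleComplex) (p q : ℤ) : Type :=
  ↥(LinearMap.ker (A.d1 p q) ⊓ LinearMap.ker (A.d2 p q)) ⧸
    Submodule.comap (LinearMap.ker (A.d1 p q) ⊓ LinearMap.ker (A.d2 p q)).subtype
      (LinearMap.range (ddbar A p q))

/-!
In degree `p+q-1` the Schweitzer complex is `A^{p,q}` alone, preceded by `A^{p-1,q-1}` and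
followed by `A^{p+1,q} ⊕ A^{p,q+1}`; the incoming differential is `∂∂̄` and the outgoing one is
`(∂, ∂̄)`. Under the identification `L^{p+q-1} ≅ A^{p,q}` the cycles therefore become
`ker ∂ ∩ ker ∂̄` and the boundaries `im ∂∂̄`, and a linear isomorphism matching the cycles and
the boundaries induces an isomorphism of the subquotients.
-/

section
variable {R M N : Type*} [Ring R] [AddCommGroup M] [Module R M] [AddCommGroup N] [Module R N]

def LinearEquiv.subquotientCongr (e : M ≃ₗ[R] N) {K L : Submodule R M} {K' L' : Submodule R N}
    (hK : K.map (e : M →ₗ[R] N) = K') (hL : L.map (e : M →ₗ[R] N) = L') :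
    (K ⧸ L.comap K.subtype) ≃ₗ[R] (K' ⧸ L'.comap K'.subtype) :=
  Submodule.Quotient.equiv _ _ ((e.submoduleMap K).trans (LinearEquiv.ofEq _ _ hK)) <| by
    ext y
    simp [Submodule.mem_map_equiv, ← hL]

end

namespace DirectSum

variable {R ι : Type*} [Semiring R] {M : ι → Type*} [∀ i, AddCommMonoid (M i)]
  [∀ i, Module R (M i)]

variable (R M) in
noncomputable def linearEquivOfUnique [Unique ι] : (⨁ i, M i) ≃ₗ[R] M default :=
  (linearEquivFunOnFintype R ι M).trans (LinearEquiv.piUnique R M)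

variable [DecidableEq ι]

theorem linearEquivOfUnique_lof [Unique ι] (m : M default) :
    linearEquivOfUnique R M (lof R ι M default m) = m :=
  lof_apply R default m

theorem linearEquivOfUnique_symm_apply [Unique ι] (m : M default) :
    (linearEquivOfUnique R M).symm m = lof R ι M default m :=
  (LinearEquiv.symm_apply_eq _).mpr (linearEquivOfUnique_lof m).symm

theorem lof_add_lof_eq_zero_iff {i j : ι} (hij : i ≠ j) (a : M i) (b : M j) :
    lof R ι M i a + lof R ι M j b = 0 ↔ a = 0 ∧ b = 0 := by
  refine ⟨fun h => ⟨?_, ?_⟩, fun ⟨ha, hb⟩ => by simp [ha, hb]⟩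
  · simpa [lof_eq_of, of_eq_of_ne _ _ _ hij] using congrArg (· i) h
  · simpa [lof_eq_of, of_eq_of_ne _ _ _ hij.symm] using congrArg (· j) h

end DirectSum

namespace SchwIdx

variable (p q : ℤ)

instance uniqueTop : Unique (SchwIdx p q (p + q - 1)) where
  default := ⟨(p, q), Or.inr ⟨by omega, by omega, le_rfl, le_rfl⟩⟩
  uniq := by
    rintro ⟨⟨r, s⟩, h⟩
    simp only [schwCond] at h
    obtain ⟨rfl, rfl⟩ : r = p ∧ s = q := by omega
    rfl

instance uniqueBelowTop : Unique (SchwIdx p q (p + q - 1 - 1)) where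
  default := ⟨(p - 1, q - 1), Or.inl ⟨by omega, by omega, by omega, by omega⟩⟩
  uniq := by
    rintro ⟨⟨r, s⟩, h⟩
    simp only [schwCond] at h
    obtain ⟨rfl, rfl⟩ : r = p - 1 ∧ s = q - 1 := by omega
    rfl

def d1Target : SchwIdx p q (p + q - 1 + 1) :=
  ⟨(p + 1, q), Or.inr ⟨by omega, by omega, by omega, le_rfl⟩⟩

def d2Target : SchwIdx p q (p + q - 1 + 1) :=
  ⟨(p, q + 1), Or.inr ⟨by omega, by omega, le_rfl, by omega⟩⟩

theorem d1Target_ne_d2Target : d1Target p q ≠ d2Target p q := by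
  simp [d1Target, d2Target, Subtype.ext_iff]

end SchwIdx

section

variable (A : DoubleComplex) (p q : ℤ)

noncomputable def schwTopEquiv : SchwL A p q (p + q - 1) ≃ₗ[ℂ] A.X p q :=
  linearEquivOfUnique ℂ _

noncomputable def schwBelowTopEquiv : SchwL A p q (p + q - 1 - 1) ≃ₗ[ℂ] A.X (p - 1) (q - 1) :=
  linearEquivOfUnique ℂ _

theorem schwLCast_lof {k k' : ℤ} (h : k = k') (i : SchwIdx p q k) (z : A.X i.1.1 i.1.2) :
    schwLCast A p q h (lof ℂ _ (fun j => A.X j.1.1 j.1.2) i z) =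
      lof ℂ (SchwIdx p q k') (fun j => A.X j.1.1 j.1.2) ⟨i.1, h ▸ i.2⟩ z := by
  subst h; rfl

theorem lof_schwIdx_castX (k : ℤ) {r s r' s' : ℤ} (hr : r = r') (hs : s = s')
    (hc : schwCond p q k (r, s)) (hc' : schwCond p q k (r', s')) (z : A.X r s) :
    lof ℂ (SchwIdx p q k) (fun j => A.X j.1.1 j.1.2) ⟨(r, s), hc⟩ z =
      lof ℂ (SchwIdx p q k) (fun j => A.X j.1.1 j.1.2) ⟨(r', s'), hc'⟩ (A.castX hr hs z) := by
  subst hr hs; rfl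

theorem schwD_lof_top (y : A.X p q) :
    schwD A p q (p + q - 1) (lof ℂ (SchwIdx p q (p + q - 1)) (fun i => A.X i.1.1 i.1.2) default y) =
      lof ℂ _ (fun i => A.X i.1.1 i.1.2) (SchwIdx.d1Target p q) (A.d1 p q y) +
        lof ℂ _ (fun i => A.X i.1.1 i.1.2) (SchwIdx.d2Target p q) (A.d2 p q y) := by
  rw [schwD, toModule_lof, dif_neg (by omega)]
  split_ifs with h1 h2 h2
  · rfl
  · exact absurd (SchwIdx.d2Target p q).2 h2
  all_goals exact absurd (SchwIdx.d1Target p q).2 h1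

theorem schwDFrom_lof_top (z : A.X (p - 1) (q - 1)) :
    schwDFrom A p q (p + q - 1)
        (lof ℂ (SchwIdx p q (p + q - 1 - 1)) (fun i => A.X i.1.1 i.1.2) default z) =
      lof ℂ (SchwIdx p q (p + q - 1)) (fun i => A.X i.1.1 i.1.2) default (ddbar A p q z) := by
  rw [schwDFrom, LinearMap.comp_apply, schwD, toModule_lof, dif_pos (by omega)]
  rw [LinearMap.comp_apply, LinearEquiv.coe_coe, schwLCast_lof]
  exact lof_schwIdx_castX A p q _ (Int.sub_add_cancel p 1) (Int.sub_add_cancel q 1) _ _ _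

theorem schwD_top_comp_symm : schwD A p q (p + q - 1) ∘ₗ (schwTopEquiv A p q).symm.toLinearMap =
    lof ℂ _ (fun i => A.X i.1.1 i.1.2) (SchwIdx.d1Target p q) ∘ₗ A.d1 p q +
      lof ℂ _ (fun i => A.X i.1.1 i.1.2) (SchwIdx.d2Target p q) ∘ₗ A.d2 p q :=
  LinearMap.ext fun y => by
    rw [LinearMap.comp_apply, LinearEquiv.coe_coe, schwTopEquiv, linearEquivOfUnique_symm_apply]
    exact schwD_lof_top A p q y

theorem schwTopEquiv_comp_schwDFrom :
    (schwTopEquiv A p q).toLinearMap ∘ₗ schwDFrom A p q (p + q - 1) ∘ₗ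
      (schwBelowTopEquiv A p q).symm.toLinearMap = ddbar A p q :=
  LinearMap.ext fun z => by
    simp only [LinearMap.comp_apply, LinearEquiv.coe_coe, schwTopEquiv, schwBelowTopEquiv,
      linearEquivOfUnique_symm_apply, schwDFrom_lof_top, linearEquivOfUnique_lof]

theorem map_ker_schwD_top :
    (LinearMap.ker (schwD A p q (p + q - 1))).map (schwTopEquiv A p q).toLinearMap =
      LinearMap.ker (A.d1 p q) ⊓ LinearMap.ker (A.d2 p q) := by
  ext y
  rw [Submodule.map_equiv_eq_comap_symm, ← LinearMap.ker_comp, schwD_top_comp_symm]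
  simp only [LinearMap.mem_ker, LinearMap.add_apply, Submodule.mem_inf]
  exact lof_add_lof_eq_zero_iff (R := ℂ) (SchwIdx.d1Target_ne_d2Target p q) _ _

theorem map_range_schwDFrom_top :
    (LinearMap.range (schwDFrom A p q (p + q - 1))).map (schwTopEquiv A p q).toLinearMap =
      LinearMap.range (ddbar A p q) := by
  rw [← LinearMap.range_comp, ← schwTopEquiv_comp_schwDFrom, ← LinearMap.comp_assoc,
    LinearMap.range_comp_of_range_eq_top _ (LinearEquiv.range _)]

end

/-- The `(p+q-1)`-st cohomology of the Schweitzer complex `L_{p,q}(A)` is the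
Bott–Chern cohomology of `A` in bidegree `(p,q)`. -/
theorem schwCoh_bott_chern (A : DoubleComplex) (p q : ℤ) :
    Nonempty (SchwCoh A p q (p + q - 1) ≃ₗ[ℂ] BottChern A p q) :=
  ⟨(schwTopEquiv A p q).subquotientCongr (map_ker_schwD_top A p q)
    (map_range_schwDFrom_top A p q)⟩
end

section
/- Let n ≥ 0 and let A be a double complex of complex vector spaces with finite-dimensional components concentrated in bidegrees 0 ≤ r,s ≤ n, and suppose there is an isomorphism of double complexes A ≅ DA (bidegree-preserving linear isomorphisms commuting with the differentials). Then for all integers p, q, k there is an isomorphism H^k(L_{p,q}(A)) ≅ (H^{2n−k−1}(L_{n−p+1,n−q+1}(A)))^∨; equivalently, there is a perfect pairing H^k(L_{p,q}(A)) × H^{2n−k−1}(L_{n−p+1,n−q+1}(A)) → ℂ. This is the abstract form of Serre duality for Schweitzer cohomology. -/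
set_option maxHeartbeats 1000000
set_option synthInstance.maxHeartbeats 400000

open DirectSum

/-! The pairings `e` assemble, bidegree by bidegree, into isomorphisms
`L^{k'}_{p',q'} ≅ (L^k_{p,q})^∨` for `p + p' = q + q' = n + 1` and `k + k' = 2n - 1`, under which
the differential of `L_{p',q'}` becomes, up to sign, the transpose of the differential of
`L_{p,q}`; the sign `-1` in degree `p + q - 2` comes from `∂̄∂ = -∂∂̄`. Transposition preserves
ranks, and for `U →f V →g W` the identity
`dim (ker g / (im f ∩ ker g)) = dim V - rk f - rk g + rk (g ∘ f)` holds without knowing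
`g ∘ f = 0`. Hence both cohomology groups have the same finite dimension. -/

open Module LinearMap

section LinearAlgebra

variable {K V₁ V₂ V₃ W₁ W₂ W₃ : Type*} [Field K]
  [AddCommGroup V₁] [Module K V₁] [AddCommGroup V₂] [Module K V₂] [AddCommGroup V₃] [Module K V₃]
  [AddCommGroup W₁] [Module K W₁] [AddCommGroup W₂] [Module K W₂] [AddCommGroup W₃] [Module K W₃]

abbrev KerModRange (f : V₁ →ₗ[K] V₂) (g : V₂ →ₗ[K] V₃) : Type _ :=
  ker g ⧸ (range f).comap (ker g).subtype

theorem finrank_kerModRange_add [FiniteDimensional K V₂] (f : V₁ →ₗ[K] V₂) (g : V₂ →ₗ[K] V₃) :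
    finrank K (KerModRange f g) + finrank K (range f) + finrank K (range g) =
      finrank K V₂ + finrank K (range (g ∘ₗ f)) := by
  have hquot := Submodule.finrank_quotient_add_finrank ((range f).comap (ker g).subtype)
  have hinter : finrank K ((range f).comap (ker g).subtype) = finrank K ↥(range f ⊓ ker g) := by
    rw [← Submodule.finrank_map_subtype_eq, Submodule.map_comap_subtype, inf_comm]
  have hrestrict := finrank_range_add_finrank_ker (g ∘ₗ (range f).subtype)
  rw [range_comp, Submodule.range_subtype, ← range_comp, ker_comp,
    ← Submodule.finrank_map_subtype_eq, Submodule.map_comap_subtype] at hrestrict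
  have hg := finrank_range_add_finrank_ker g
  unfold KerModRange
  omega

theorem finrank_range_eq_of_comp_eq_smul_comp {f : W₁ →ₗ[K] W₂} {h : V₁ →ₗ[K] V₂}
    (Φ : W₁ ≃ₗ[K] V₁) (Ψ : W₂ ≃ₗ[K] V₂) {c : K} (hc : c ≠ 0)
    (H : Ψ.toLinearMap ∘ₗ f = c • (h ∘ₗ Φ.toLinearMap)) :
    finrank K (range f) = finrank K (range h) :=
  calc finrank K (range f) = finrank K ((range f).map Ψ.toLinearMap) :=
        (LinearEquiv.finrank_map_eq Ψ _).symm
    _ = finrank K (range h) := by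
      rw [← range_comp, H, range_smul _ _ hc, range_comp_of_range_eq_top _ Φ.range]

theorem finrank_kerModRange_eq_of_dual [FiniteDimensional K V₁] [FiniteDimensional K V₂]
    [FiniteDimensional K V₃]
    (f : V₁ →ₗ[K] V₂) (g : V₂ →ₗ[K] V₃) (f' : W₁ →ₗ[K] W₂) (g' : W₂ →ₗ[K] W₃)
    (Φ₁ : W₁ ≃ₗ[K] Dual K V₃) (Φ₂ : W₂ ≃ₗ[K] Dual K V₂) (Φ₃ : W₃ ≃ₗ[K] Dual K V₁)
    {c₁ c₂ : K} (hc₁ : c₁ ≠ 0) (hc₂ : c₂ ≠ 0)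
    (h₁ : Φ₂.toLinearMap ∘ₗ f' = c₁ • (g.dualMap ∘ₗ Φ₁.toLinearMap))
    (h₂ : Φ₃.toLinearMap ∘ₗ g' = c₂ • (f.dualMap ∘ₗ Φ₂.toLinearMap)) :
    finrank K (KerModRange f g) = finrank K (KerModRange f' g') := by
  have : FiniteDimensional K W₂ := Φ₂.symm.finiteDimensional
  have hcomp : Φ₃.toLinearMap ∘ₗ (g' ∘ₗ f') =
      (c₂ * c₁) • ((g ∘ₗ f).dualMap ∘ₗ Φ₁.toLinearMap) := by
    rw [← comp_assoc, h₂, smul_comp, comp_assoc, h₁, comp_smul, smul_smul, ← comp_assoc,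
      dualMap_comp_dualMap]
  have hf' := finrank_range_eq_of_comp_eq_smul_comp Φ₁ Φ₂ hc₁ h₁
  have hg' := finrank_range_eq_of_comp_eq_smul_comp Φ₂ Φ₃ hc₂ h₂
  have hgf' := finrank_range_eq_of_comp_eq_smul_comp Φ₁ Φ₃ (mul_ne_zero hc₂ hc₁) hcomp
  rw [finrank_range_dualMap_eq_finrank_range] at hf' hg' hgf'
  have hW₂ : finrank K W₂ = finrank K V₂ := Φ₂.finrank_eq.trans Subspace.dual_finrank_eq
  have := finrank_kerModRange_add f g
  have := finrank_kerModRange_add f' g'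
  omega

theorem bijective_of_injective_of_injective_dual [FiniteDimensional K V₁]
    [FiniteDimensional K V₂] {f : V₁ →ₗ[K] Dual K V₂} {g : V₂ →ₗ[K] Dual K V₁}
    (hf : Function.Injective f) (hg : Function.Injective g) : Function.Bijective f := by
  have h₁₂ := f.finrank_le_finrank_of_injective hf
  have h₂₁ := g.finrank_le_finrank_of_injective hg
  rw [Subspace.dual_finrank_eq] at h₁₂ h₂₁
  refine ⟨hf, (injective_iff_surjective_of_finrank_eq_finrank ?_).mp hf⟩
  rw [Subspace.dual_finrank_eq]
  omega

theorem LinearEquiv.dual_pairing_nondegenerate (φ : V₁ ≃ₗ[K] Dual K V₂) :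
    (∀ x : V₁, x ≠ 0 → ∃ y, φ x y ≠ 0) ∧ (∀ y : V₂, y ≠ 0 → ∃ x, φ x y ≠ 0) := by
  refine ⟨fun x hx => ?_, fun y hy => ?_⟩
  · by_contra! h
    exact hx (φ.map_eq_zero_iff.mp (LinearMap.ext h))
  · by_contra! h
    refine hy ((Module.forall_dual_apply_eq_zero_iff K y).mp fun ξ => ?_)
    obtain ⟨x, rfl⟩ := φ.surjective ξ
    exact h x

end LinearAlgebra

theorem DirectSum.finite_of_subsingleton_of_notMem {R ι : Type*} [Semiring R] [DecidableEq ι]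
    {M : ι → Type*} [∀ i, AddCommMonoid (M i)] [∀ i, Module R (M i)]
    [∀ i, Module.Finite R (M i)] (S : Finset ι) (hS : ∀ i ∉ S, Subsingleton (M i)) :
    Module.Finite R (⨁ i, M i) := by
  have hsup : ⨆ i ∈ S, range (lof R ι M i) = ⊤ := by
    rw [eq_top_iff, ← DFinsupp.iSup_range_lsingle]
    refine iSup_le fun i => ?_
    by_cases hi : i ∈ S
    · exact le_biSup (fun i => range (lof R ι M i)) hi
    · have := hS i hi
      rw [range_eq_bot.2 (Subsingleton.elim _ _)]
      exact bot_le
  exact ⟨hsup ▸ Submodule.fg_biSup S _ fun i _ =>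
    range_eq_map (lof R ι M i) ▸ Module.Finite.fg_top.map _⟩

theorem sub_add_one_add_one (n r : ℤ) : n - (r + 1) + 1 = n - r := by ring

namespace DoubleComplex

variable {A : DoubleComplex}

@[simp]
theorem castX_rfl {r s : ℤ} : A.castX (rfl : r = r) (rfl : s = s) = LinearEquiv.refl ℂ _ := rfl

theorem castX_symm {r s r' s' : ℤ} (h₁ : r = r') (h₂ : s = s') :
    (A.castX h₁ h₂).symm = A.castX h₁.symm h₂.symm := by
  subst h₁ h₂; rfl

variable {n : ℤ} (e : ∀ r s : ℤ, A.X r s ≃ₗ[ℂ] Dual ℂ (A.X (n - r) (n - s)))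

noncomputable def dualPairing (a b c d : ℤ) : A.X a b →ₗ[ℂ] Dual ℂ (A.X c d) :=
  if h : n - a = c ∧ n - b = d then
    (A.castX h.1 h.2).symm.toLinearMap.dualMap ∘ₗ (e a b).toLinearMap
  else 0

theorem dualPairing_self (a b : ℤ) (w : A.X a b) (x : A.X (n - a) (n - b)) :
    dualPairing e a b (n - a) (n - b) w x = e a b w x := by
  simp [dualPairing]

theorem dualPairing_of_not {a b c d : ℤ} (h : ¬(n - a = c ∧ n - b = d)) :
    dualPairing e a b c d = 0 :=
  dif_neg h

theorem dualPairing_d1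
    (he1 : ∀ (r s : ℤ) (x : A.X r s),
      e (r + 1) s (A.d1 r s x) =
        ((A.castX (sub_add_one_add_one n r) rfl).toLinearMap.comp
          (A.d1 (n - (r + 1)) (n - s))).dualMap (e r s x))
    (a b c d : ℤ) (w : A.X a b) (x : A.X c d) :
    dualPairing e (a + 1) b c d (A.d1 a b w) x = dualPairing e a b (c + 1) d w (A.d1 c d x) := by
  by_cases h : n - (a + 1) = c ∧ n - b = d
  · obtain ⟨rfl, rfl⟩ := h
    rw [dualPairing_self, he1, dualPairing, dif_pos (by omega)]
    simp [castX_symm]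
  · rw [dualPairing_of_not e h, dualPairing_of_not e (by omega)]
    rfl

theorem dualPairing_d2
    (he2 : ∀ (r s : ℤ) (x : A.X r s),
      e r (s + 1) (A.d2 r s x) =
        ((A.castX rfl (sub_add_one_add_one n s)).toLinearMap.comp
          (A.d2 (n - r) (n - (s + 1)))).dualMap (e r s x))
    (a b c d : ℤ) (w : A.X a b) (x : A.X c d) :
    dualPairing e a (b + 1) c d (A.d2 a b w) x = dualPairing e a b c (d + 1) w (A.d2 c d x) := by
  by_cases h : n - a = c ∧ n - (b + 1) = d
  · obtain ⟨rfl, rfl⟩ := h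
    rw [dualPairing_self, he2, dualPairing, dif_pos (by omega)]
    simp [castX_symm]
  · rw [dualPairing_of_not e h, dualPairing_of_not e (by omega)]
    rfl

def IsDualIso : Prop :=
  (∀ (r s : ℤ) (x : A.X r s),
      e (r + 1) s (A.d1 r s x) =
        ((A.castX (sub_add_one_add_one n r) rfl).toLinearMap.comp
          (A.d1 (n - (r + 1)) (n - s))).dualMap (e r s x)) ∧
    ∀ (r s : ℤ) (x : A.X r s),
      e r (s + 1) (A.d2 r s x) =
        ((A.castX rfl (sub_add_one_add_one n s)).toLinearMap.comp
          (A.d2 (n - r) (n - (s + 1)))).dualMap (e r s x)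

end DoubleComplex

section Schweitzer

open DoubleComplex

variable {A : DoubleComplex} {n : ℤ}

theorem schwCond_dual {p q k p' q' k' r s : ℤ} (hp : p + p' = n + 1) (hq : q + q' = n + 1)
    (hk : k + k' = 2 * n - 1) (h : schwCond p q k (r, s)) : schwCond p' q' k' (n - r, n - s) := by
  simp only [schwCond] at h ⊢
  omega

theorem schwL_finite (hfin : ∀ r s : ℤ, FiniteDimensional ℂ (A.X r s))
    (hconc : ∀ r s : ℤ, (r < 0 ∨ n < r ∨ s < 0 ∨ n < s) → Subsingleton (A.X r s)) (p q k : ℤ) :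
    FiniteDimensional ℂ (SchwL A p q k) := by
  refine DirectSum.finite_of_subsingleton_of_notMem
    ((Finset.Icc 0 n ×ˢ Finset.Icc 0 n).subtype (schwCond p q k)) fun i hi => hconc _ _ ?_
  simp only [Finset.mem_subtype, Finset.mem_product, Finset.mem_Icc] at hi
  omega

variable (A) in
noncomputable def schwIncl (p q k r s : ℤ) : A.X r s →ₗ[ℂ] SchwL A p q k :=
  if h : schwCond p q k (r, s) then lof ℂ (SchwIdx p q k) (fun j => A.X j.1.1 j.1.2) ⟨(r, s), h⟩
  else 0

theorem schwD_lof (p q k a b : ℤ) (h : schwCond p q k (a, b)) (w : A.X a b) :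
    schwD A p q k (lof ℂ (SchwIdx p q k) (fun j => A.X j.1.1 j.1.2) ⟨(a, b), h⟩ w) =
      if k = p + q - 2 then schwIncl A p q (k + 1) (a + 1) (b + 1) (A.d1 a (b + 1) (A.d2 a b w))
      else schwIncl A p q (k + 1) (a + 1) b (A.d1 a b w) +
        schwIncl A p q (k + 1) a (b + 1) (A.d2 a b w) := by
  rw [schwD, toModule_lof]
  by_cases hk : k = p + q - 2
  · rw [dif_pos hk, if_pos hk, schwIncl, dif_pos (by simp only [schwCond] at h ⊢; omega)]
    rfl
  · rw [dif_neg hk, if_neg hk]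
    unfold schwIncl
    split_ifs <;> rfl

def schwSign (p q k : ℤ) : ℂ := if k = p + q - 2 then -1 else 1

theorem schwSign_ne_zero (p q k : ℤ) : schwSign p q k ≠ 0 := by
  unfold schwSign
  split_ifs <;> norm_num

variable (e : ∀ r s : ℤ, A.X r s ≃ₗ[ℂ] Dual ℂ (A.X (n - r) (n - s)))

/-- `schwDual e p q k p' q' k' y x = ∑ e (y_{a,b}) (x_{n-a,n-b})`. -/
noncomputable def schwDual (p q k p' q' k' : ℤ) :
    SchwL A p' q' k' →ₗ[ℂ] Dual ℂ (SchwL A p q k) :=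
  toModule ℂ _ _ fun i =>
    (toModule ℂ _ _ fun j => (dualPairing e i.1.1 i.1.2 j.1.1 j.1.2).flip).flip

theorem schwDual_lof_lof {p q k p' q' k' : ℤ} (i : SchwIdx p' q' k') (j : SchwIdx p q k)
    (w : A.X i.1.1 i.1.2) (x : A.X j.1.1 j.1.2) :
    schwDual e p q k p' q' k' (lof ℂ _ (fun j => A.X j.1.1 j.1.2) i w)
      (lof ℂ _ (fun j => A.X j.1.1 j.1.2) j x) = dualPairing e i.1.1 i.1.2 j.1.1 j.1.2 w x := by
  simp [schwDual]

theorem schwDual_apply_lof {p q k p' q' k' : ℤ} (y : SchwL A p' q' k') (i : SchwIdx p' q' k')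
    (j : SchwIdx p q k) (hij : n - i.1.1 = j.1.1 ∧ n - i.1.2 = j.1.2) (x : A.X j.1.1 j.1.2) :
    schwDual e p q k p' q' k' y (lof ℂ _ (fun j => A.X j.1.1 j.1.2) j x) =
      dualPairing e i.1.1 i.1.2 j.1.1 j.1.2 (y i) x := by
  induction y using DirectSum.induction_on with
  | zero => simp
  | of i' w =>
    rw [← lof_eq_of ℂ, schwDual_lof_lof]
    by_cases h : i' = i
    · subst h
      rw [lof_apply]
    · have hi' : ¬(n - i'.1.1 = j.1.1 ∧ n - i'.1.2 = j.1.2) := fun h' =>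
        h (Subtype.ext (Prod.ext (by omega) (by omega)))
      rw [dualPairing_of_not e hi', lof_eq_of ℂ, of_eq_of_ne _ _ _ (Ne.symm h), map_zero]
      rfl
  | add y y' hy hy' => simp [hy, hy']

theorem schwDual_injective {p q k p' q' k' : ℤ} (hp : p + p' = n + 1) (hq : q + q' = n + 1)
    (hk : k + k' = 2 * n - 1) : Function.Injective (schwDual e p q k p' q' k') := by
  rw [← ker_eq_bot, Submodule.eq_bot_iff]
  intro y hy
  ext ⟨⟨a, b⟩, hi⟩ : 1
  refine (e a b).injective (LinearMap.ext fun x => ?_)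
  have := schwDual_apply_lof e y ⟨(a, b), hi⟩
    ⟨(n - a, n - b), schwCond_dual (by omega : p' + p = n + 1) (by omega : q' + q = n + 1)
      (by omega : k' + k = 2 * n - 1) hi⟩
    ⟨rfl, rfl⟩ x
  rw [mem_ker.mp hy, dualPairing_self] at this
  simpa using this.symm

theorem schwDual_bijective (hfin : ∀ r s : ℤ, FiniteDimensional ℂ (A.X r s))
    (hconc : ∀ r s : ℤ, (r < 0 ∨ n < r ∨ s < 0 ∨ n < s) → Subsingleton (A.X r s))
    {p q k p' q' k' : ℤ} (hp : p + p' = n + 1) (hq : q + q' = n + 1)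
    (hk : k + k' = 2 * n - 1) : Function.Bijective (schwDual e p q k p' q' k') :=
  have := schwL_finite hfin hconc
  bijective_of_injective_of_injective_dual (schwDual_injective e hp hq hk)
    (schwDual_injective e (by omega : p' + p = n + 1) (by omega : q' + q = n + 1)
      (by omega : k' + k = 2 * n - 1))

theorem schwDual_incl_lof {p q k p' q' k' : ℤ} (hp : p + p' = n + 1) (hq : q + q' = n + 1)
    (hk : k + k' = 2 * n - 1) (r s : ℤ) (w : A.X r s) (j : SchwIdx p q k) (x : A.X j.1.1 j.1.2) :
    schwDual e p q k p' q' k' (schwIncl A p' q' k' r s w) (lof ℂ _ (fun j => A.X j.1.1 j.1.2) j x) =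
      dualPairing e r s j.1.1 j.1.2 w x := by
  unfold schwIncl
  split_ifs with h
  · exact schwDual_lof_lof e ⟨(r, s), h⟩ j w x
  · obtain ⟨⟨c, d⟩, hj⟩ := j
    have hrs : ¬(n - r = c ∧ n - s = d) := by
      rintro ⟨rfl, rfl⟩
      exact h (by simpa using schwCond_dual hp hq hk hj)
    rw [dualPairing_of_not e hrs]
    simp

theorem schwDual_lof_incl {p q k p' q' k' : ℤ} (hp : p + p' = n + 1) (hq : q + q' = n + 1)
    (hk : k + k' = 2 * n - 1) (i : SchwIdx p' q' k') (w : A.X i.1.1 i.1.2) (r s : ℤ) (x : A.X r s) :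
    schwDual e p q k p' q' k' (lof ℂ _ (fun j => A.X j.1.1 j.1.2) i w) (schwIncl A p q k r s x) =
      dualPairing e i.1.1 i.1.2 r s w x := by
  unfold schwIncl
  split_ifs with h
  · exact schwDual_lof_lof e i ⟨(r, s), h⟩ w x
  · obtain ⟨⟨a, b⟩, hi⟩ := i
    have hrs : ¬(n - a = r ∧ n - b = s) := by
      rintro ⟨rfl, rfl⟩
      exact h (schwCond_dual (by omega) (by omega) (by omega) hi)
    rw [dualPairing_of_not e hrs]
    simp

theorem schwDual_comp_schwD (he : IsDualIso e) {p q k p' q' m : ℤ} (hp : p + p' = n + 1)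
    (hq : q + q' = n + 1) (hm : k + 1 + m = 2 * n - 1) :
    schwDual e p q k p' q' (m + 1) ∘ₗ schwD A p' q' m =
      schwSign p q k • ((schwD A p q k).dualMap ∘ₗ schwDual e p q (k + 1) p' q' m) := by
  ext ⟨⟨a, b⟩, hi⟩ z ⟨⟨c, d⟩, hj⟩ x
  simp only [LinearMap.comp_apply, LinearMap.smul_apply, dualMap_apply, schwSign]
  rw [schwD_lof, schwD_lof]
  have hmid : m = p' + q' - 2 ↔ k = p + q - 2 := by omega
  by_cases hk : k = p + q - 2
  · rw [if_pos (hmid.2 hk), if_pos hk, if_pos hk, schwDual_incl_lof e hp hq (by omega),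
      schwDual_lof_incl e hp hq (by omega)]
    rw [dualPairing_d1 e he.1, dualPairing_d2 e he.2,
      eq_neg_of_add_eq_zero_right (A.anticomm c d x), map_neg, neg_one_smul]
  · rw [if_neg (mt hmid.1 hk), if_neg hk, if_neg hk, one_smul, map_add, map_add,
      LinearMap.add_apply, schwDual_incl_lof e hp hq (by omega), schwDual_incl_lof e hp hq (by omega),
      schwDual_lof_incl e hp hq (by omega), schwDual_lof_incl e hp hq (by omega)]
    rw [dualPairing_d1 e he.1, dualPairing_d2 e he.2]

theorem schwDual_comp_schwLCast {p q k p' q' k₁ k₂ : ℤ} (h : k₁ = k₂) :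
    schwDual e p q k p' q' k₂ ∘ₗ (schwLCast A p' q' h).toLinearMap = schwDual e p q k p' q' k₁ := by
  subst h; rfl

theorem schwLCast_dualMap_comp_schwDual {p q k₁ k₂ p' q' k' : ℤ} (h : k₁ = k₂) :
    (schwLCast A p q h).toLinearMap.dualMap ∘ₗ schwDual e p q k₂ p' q' k' =
      schwDual e p q k₁ p' q' k' := by
  subst h; rfl

theorem schwDual_comp_schwDFrom (he : IsDualIso e) {p q k p' q' k' : ℤ}
    (hp : p + p' = n + 1) (hq : q + q' = n + 1) (hk : k + k' = 2 * n - 1) :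
    schwDual e p q k p' q' k' ∘ₗ schwDFrom A p' q' k' =
      schwSign p q k • ((schwD A p q k).dualMap ∘ₗ schwDual e p q (k + 1) p' q' (k' - 1)) := by
  rw [schwDFrom, ← comp_assoc, schwDual_comp_schwLCast]
  exact schwDual_comp_schwD e he hp hq (by omega)

theorem schwDual_comp_schwD_eq_smul_schwDFrom_dualMap (he : IsDualIso e) {p q k p' q' k' : ℤ}
    (hp : p + p' = n + 1) (hq : q + q' = n + 1) (hk : k + k' = 2 * n - 1) :
    schwDual e p q (k - 1) p' q' (k' + 1) ∘ₗ schwD A p' q' k' =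
      schwSign p q (k - 1) • ((schwDFrom A p q k).dualMap ∘ₗ schwDual e p q k p' q' k') := by
  rw [schwDFrom, ← dualMap_comp_dualMap, comp_assoc, schwLCast_dualMap_comp_schwDual]
  exact schwDual_comp_schwD e he hp hq (by omega)

theorem finrank_schwCoh_eq (hfin : ∀ r s : ℤ, FiniteDimensional ℂ (A.X r s))
    (hconc : ∀ r s : ℤ, (r < 0 ∨ n < r ∨ s < 0 ∨ n < s) → Subsingleton (A.X r s))
    (he : IsDualIso e) {p q k p' q' k' : ℤ} (hp : p + p' = n + 1) (hq : q + q' = n + 1)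
    (hk : k + k' = 2 * n - 1) :
    finrank ℂ (SchwCoh A p q k) = finrank ℂ (SchwCoh A p' q' k') :=
  have := schwL_finite hfin hconc
  finrank_kerModRange_eq_of_dual (schwDFrom A p q k) (schwD A p q k) (schwDFrom A p' q' k')
    (schwD A p' q' k')
    (.ofBijective _ (schwDual_bijective e hfin hconc hp hq (by omega : k + 1 + (k' - 1) = _)))
    (.ofBijective _ (schwDual_bijective e hfin hconc hp hq hk))
    (.ofBijective _ (schwDual_bijective e hfin hconc hp hq (by omega : k - 1 + (k' + 1) = _)))
    (schwSign_ne_zero p q k) (schwSign_ne_zero p q (k - 1))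
    (schwDual_comp_schwDFrom e he hp hq hk)
    (schwDual_comp_schwD_eq_smul_schwDFrom_dualMap e he hp hq hk)

end Schweitzer

/-- Serre duality for Schweitzer cohomology (abstract form). Let `A` be a double
complex with finite-dimensional components concentrated in bidegrees `0 ≤ r,s ≤ n`
which is isomorphic to its dual double complex `DA` (a bidegree-preserving linear
isomorphism commuting with the differentials, where `(DA)^{r,s} = (A^{n-r,n-s})^∨`
with transposed differentials). Then
`H^k(L_{p,q}(A)) ≅ (H^{2n-k-1}(L_{n-p+1,n-q+1}(A)))^∨`; equivalently, there is a
perfect pairing `H^k(L_{p,q}(A)) × H^{2n-k-1}(L_{n-p+1,n-q+1}(A)) → ℂ`. -/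
theorem schw_serre_duality (n : ℤ) (A : DoubleComplex)
    (hfin : ∀ r s : ℤ, FiniteDimensional ℂ (A.X r s))
    (hconc : ∀ r s : ℤ, (r < 0 ∨ n < r ∨ s < 0 ∨ n < s) → Subsingleton (A.X r s))
    (e : ∀ r s : ℤ, A.X r s ≃ₗ[ℂ] Module.Dual ℂ (A.X (n - r) (n - s)))
    (he1 : ∀ (r s : ℤ) (x : A.X r s),
      e (r + 1) s (A.d1 r s x) =
        ((A.castX (show n - (r + 1) + 1 = n - r by omega) rfl).toLinearMap.comp
          (A.d1 (n - (r + 1)) (n - s))).dualMap (e r s x))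
    (he2 : ∀ (r s : ℤ) (x : A.X r s),
      e r (s + 1) (A.d2 r s x) =
        ((A.castX rfl (show n - (s + 1) + 1 = n - s by omega)).toLinearMap.comp
          (A.d2 (n - r) (n - (s + 1)))).dualMap (e r s x))
    (p q k : ℤ) :
    Nonempty (SchwCoh A p q k ≃ₗ[ℂ]
        Module.Dual ℂ (SchwCoh A (n - p + 1) (n - q + 1) (2 * n - k - 1))) ∧
    ∃ P : SchwCoh A p q k →ₗ[ℂ]
        SchwCoh A (n - p + 1) (n - q + 1) (2 * n - k - 1) →ₗ[ℂ] ℂ,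
      (∀ x : SchwCoh A p q k, x ≠ 0 → ∃ y, P x y ≠ 0) ∧
      (∀ y : SchwCoh A (n - p + 1) (n - q + 1) (2 * n - k - 1), y ≠ 0 →
        ∃ x, P x y ≠ 0) := by
  have := schwL_finite hfin hconc
  have hdim : finrank ℂ (SchwCoh A p q k) =
      finrank ℂ (SchwCoh A (n - p + 1) (n - q + 1) (2 * n - k - 1)) :=
    finrank_schwCoh_eq e hfin hconc ⟨he1, he2⟩ (by omega) (by omega) (by omega)
  let φ := LinearEquiv.ofFinrankEq _ _ (hdim.trans Subspace.dual_finrank_eq.symm)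
  exact ⟨⟨φ⟩, φ.toLinearMap, φ.dual_pairing_nondegenerate⟩
end

section
/- Let U and W be finite-dimensional complex vector spaces, α ∈ U and β ∈ W nonzero, and a, b ≥ 0. If ω ∈ Λ^a U ⊗ Λ^b W satisfies L_α ω = 0 and L_β ω = 0, then there exists η ∈ Λ^{a−1} U ⊗ Λ^{b−1} W with ω = L_α L_β η. (Exactness of the symbol complex of the Schweitzer complex in the Bott–Chern degree.) -/
open scoped TensorProduct

variable {U W : Type} [AddCommGroup U] [Module ℂ U] [AddCommGroup W] [Module ℂ W]

/-- Left wedge multiplication `L_α = α ∧ -` on exterior powers. -/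
noncomputable def Lmul (α : U) (a : ℕ) : ⋀[ℂ]^a U →ₗ[ℂ] ⋀[ℂ]^(a + 1) U :=
  (LinearMap.mulLeft ℂ (ExteriorAlgebra.ι ℂ α)).restrict fun x hx => by
    have h1 : ExteriorAlgebra.ι ℂ α ∈ ⋀[ℂ]^1 U := by
      show ExteriorAlgebra.ι ℂ α ∈ LinearMap.range (ExteriorAlgebra.ι ℂ (M := U)) ^ 1
      rw [pow_one]; exact LinearMap.mem_range_self _ α
    exact (Nat.add_comm 1 a) ▸ SetLike.mul_mem_graded h1 hx

lemma Lmul_Lmul (α : U) (a : ℕ) (x : ⋀[ℂ]^a U) :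
    Lmul α (a + 1) (Lmul α a x) = 0 := by
  apply Subtype.ext
  show ExteriorAlgebra.ι ℂ α * (ExteriorAlgebra.ι ℂ α * (x : ExteriorAlgebra ℂ U)) = 0
  rw [← mul_assoc, ExteriorAlgebra.ι_sq_zero, zero_mul]

/-- `BX U W r s = Λ^r U ⊗ Λ^s W` for `r, s ≥ 0`, and the zero space otherwise. -/
noncomputable def BX (U W : Type) [AddCommGroup U] [Module ℂ U] [AddCommGroup W] [Module ℂ W] :
    ℤ → ℤ → Type
  | Int.ofNat a, Int.ofNat b => ⋀[ℂ]^a U ⊗[ℂ] ⋀[ℂ]^b W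
  | Int.ofNat _, Int.negSucc _ => PUnit
  | Int.negSucc _, _ => PUnit

noncomputable instance : ∀ r s, AddCommGroup (BX U W r s)
  | Int.ofNat a, Int.ofNat b => inferInstanceAs (AddCommGroup (⋀[ℂ]^a U ⊗[ℂ] ⋀[ℂ]^b W))
  | Int.ofNat _, Int.negSucc _ => inferInstanceAs (AddCommGroup PUnit)
  | Int.negSucc _, Int.ofNat _ => inferInstanceAs (AddCommGroup PUnit)
  | Int.negSucc _, Int.negSucc _ => inferInstanceAs (AddCommGroup PUnit)

noncomputable instance : ∀ r s, Module ℂ (BX U W r s)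
  | Int.ofNat a, Int.ofNat b => inferInstanceAs (Module ℂ (⋀[ℂ]^a U ⊗[ℂ] ⋀[ℂ]^b W))
  | Int.ofNat _, Int.negSucc _ => inferInstanceAs (Module ℂ PUnit)
  | Int.negSucc _, Int.ofNat _ => inferInstanceAs (Module ℂ PUnit)
  | Int.negSucc _, Int.negSucc _ => inferInstanceAs (Module ℂ PUnit)

/-- The operator `L_α = (α ∧ -) ⊗ id` on `BX U W`. -/
noncomputable def Bd1 (α : U) : ∀ r s, BX U W r s →ₗ[ℂ] BX U W (r + 1) s
  | Int.ofNat a, Int.ofNat b => TensorProduct.map (Lmul α a) (LinearMap.id (M := ⋀[ℂ]^b W))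
  | Int.ofNat _, Int.negSucc _ => 0
  | Int.negSucc _, _ => 0

/-- The operator `L_β = id ⊗ (β ∧ -)` on `BX U W`. -/
noncomputable def Bd2u (β : W) : ∀ r s, BX U W r s →ₗ[ℂ] BX U W r (s + 1)
  | Int.ofNat a, Int.ofNat b => TensorProduct.map (LinearMap.id (M := ⋀[ℂ]^a U)) (Lmul β b)
  | Int.ofNat _, Int.negSucc _ => 0
  | Int.negSucc _, _ => 0

/-- The signed operator `(-1)^r L_β = (-1)^r (id ⊗ (β ∧ -))` on `BX U W`. -/
noncomputable def Bd2s (β : W) : ∀ r s, BX U W r s →ₗ[ℂ] BX U W r (s + 1)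
  | Int.ofNat a, Int.ofNat b =>
      ((-1 : ℂ) ^ a) • TensorProduct.map (LinearMap.id (M := ⋀[ℂ]^a U)) (Lmul β b)
  | Int.ofNat _, Int.negSucc _ => 0
  | Int.negSucc _, _ => 0

/-- Transport of `BX` along equalities of the indices. -/
noncomputable def BXcast {r s r' s' : ℤ} (h1 : r = r') (h2 : s = s') :
    BX U W r s ≃ₗ[ℂ] BX U W r' s' := by
  subst h1; subst h2; exact LinearEquiv.refl ℂ _

/-!
Choose linear forms `f`, `g` with `f α = 1` and `g β = 1`. The interior products `ι_f`, `ι_g`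
satisfy the Cartan identities `L_α ι_f + ι_f L_α = 1` and `L_β ι_g + ι_g L_β = 1`, so they are
contracting homotopies, and `η = (ι_f ⊗ ι_g) ω` works:
`L_α L_β η = ((1 - ι_f L_α) ⊗ (1 - ι_g L_β)) ω = ω`.
When `a = 0` or `b = 0` the map `L_α` (resp. `L_β`) is injective on `⋀^0`, so `ω = 0`.
-/

namespace ExteriorAlgebra

variable {R M : Type*} [CommRing R] [AddCommGroup M] [Module R M]

theorem ι_mem_exteriorPower_one (m : M) : ι R m ∈ ⋀[R]^1 M := by
  rw [exteriorPower, pow_one]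
  exact LinearMap.mem_range_self _ m

theorem ι_mul_mem_exteriorPower (m : M) {n : ℕ} {x : ExteriorAlgebra R M}
    (hx : x ∈ ⋀[R]^n M) : ι R m * x ∈ ⋀[R]^(n + 1) M :=
  Nat.add_comm 1 n ▸ SetLike.mul_mem_graded (ι_mem_exteriorPower_one m) hx

theorem contractLeft_mem_exteriorPower (f : Module.Dual R M) :
    ∀ {n : ℕ} {x : ExteriorAlgebra R M}, x ∈ ⋀[R]^(n + 1) M →
      CliffordAlgebra.contractLeft (Q := 0) f x ∈ ⋀[R]^n M
  | 0, x, hx => by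
    rw [exteriorPower, pow_one] at hx
    obtain ⟨m, rfl⟩ := hx
    rw [CliffordAlgebra.contractLeft_ι (Q := 0)]
    exact Submodule.algebraMap_mem _
  | n + 1, x, hx => by
    rw [exteriorPower, pow_succ'] at hx
    induction hx using Submodule.mul_induction_on' with
    | mem_mul_mem c hc y hy =>
      obtain ⟨m, rfl⟩ := hc
      rw [CliffordAlgebra.contractLeft_ι_mul (Q := 0)]
      exact sub_mem (Submodule.smul_mem _ _ hy)
        (ι_mul_mem_exteriorPower m (contractLeft_mem_exteriorPower f hy))
    | add x _ y _ hx hy => rw [map_add]; exact add_mem hx hy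

end ExteriorAlgebra

noncomputable def interiorMul {R M : Type*} [CommRing R] [AddCommGroup M] [Module R M]
    (f : Module.Dual R M) (n : ℕ) : ⋀[R]^(n + 1) M →ₗ[R] ⋀[R]^n M :=
  (CliffordAlgebra.contractLeft (Q := 0) f).restrict fun _ ↦
    ExteriorAlgebra.contractLeft_mem_exteriorPower f

theorem Lmul_comp_interiorMul_add_interiorMul_comp_Lmul (f : Module.Dual ℂ U) (α : U) (n : ℕ) :
    Lmul α n ∘ₗ interiorMul f n + interiorMul f (n + 1) ∘ₗ Lmul α (n + 1) =
      f α • LinearMap.id := by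
  refine LinearMap.ext fun x ↦ Subtype.ext ?_
  change ExteriorAlgebra.ι ℂ α * CliffordAlgebra.contractLeft (Q := 0) f x +
    CliffordAlgebra.contractLeft (Q := 0) f (ExteriorAlgebra.ι ℂ α * x) = f α • x
  rw [CliffordAlgebra.contractLeft_ι_mul (Q := 0)]
  abel

theorem interiorMul_Lmul_zero (f : Module.Dual ℂ U) (α : U) (x : ⋀[ℂ]^0 U) :
    interiorMul f 0 (Lmul α 0 x) = f α • x := by
  obtain ⟨c, hc⟩ := Submodule.mem_one.mp x.2
  apply Subtype.ext
  change CliffordAlgebra.contractLeft (Q := 0) f (ExteriorAlgebra.ι ℂ α * x) = f α • x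
  rw [CliffordAlgebra.contractLeft_ι_mul (Q := 0), ← hc, CliffordAlgebra.contractLeft_algebraMap,
    mul_zero, sub_zero]

theorem Lmul_zero_injective {α : U} (hα : α ≠ 0) : Function.Injective (Lmul α 0) := by
  obtain ⟨f, hf⟩ := Module.Projective.exists_dual_eq_one ℂ hα
  refine Function.LeftInverse.injective (g := interiorMul f 0) fun x ↦ ?_
  rw [interiorMul_Lmul_zero, hf, one_smul]

theorem TensorProduct.map_map_eq_self_of_homotopy {R M₀ M₁ M₂ N₀ N₁ N₂ : Type*} [CommRing R]
    [AddCommGroup M₀] [AddCommGroup M₁] [AddCommGroup M₂] [AddCommGroup N₀] [AddCommGroup N₁]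
    [AddCommGroup N₂] [Module R M₀] [Module R M₁] [Module R M₂] [Module R N₀] [Module R N₁]
    [Module R N₂] {d : M₀ →ₗ[R] M₁} {d' : M₁ →ₗ[R] M₂} {h : M₁ →ₗ[R] M₀} {h' : M₂ →ₗ[R] M₁}
    {e : N₀ →ₗ[R] N₁} {e' : N₁ →ₗ[R] N₂} {k : N₁ →ₗ[R] N₀} {k' : N₂ →ₗ[R] N₁}
    (hM : d ∘ₗ h + h' ∘ₗ d' = LinearMap.id) (hN : e ∘ₗ k + k' ∘ₗ e' = LinearMap.id)
    {ω : M₁ ⊗[R] N₁} (hd' : d'.rTensor N₁ ω = 0) (he' : e'.lTensor M₁ ω = 0) :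
    map d e (map h k ω) = ω := by
  have hl : (e ∘ₗ k).lTensor M₁ ω = ω := by
    rw [eq_sub_of_add_eq hN, LinearMap.lTensor_sub, LinearMap.sub_apply, LinearMap.lTensor_id,
      LinearMap.lTensor_comp_apply, he', map_zero, sub_zero, LinearMap.id_apply]
  have hr : (d ∘ₗ h).rTensor N₁ ω = ω := by
    rw [eq_sub_of_add_eq hM, LinearMap.rTensor_sub, LinearMap.sub_apply, LinearMap.rTensor_id,
      LinearMap.rTensor_comp_apply, hd', map_zero, sub_zero, LinearMap.id_apply]
  rw [← LinearMap.comp_apply, ← map_comp, ← LinearMap.rTensor_comp_lTensor, LinearMap.comp_apply,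
    hl, hr]

theorem exists_rTensor_Lmul_lTensor_Lmul_eq {α : U} {β : W} (hα : α ≠ 0) (hβ : β ≠ 0) (a b : ℕ)
    {ω : ⋀[ℂ]^(a + 1) U ⊗[ℂ] ⋀[ℂ]^(b + 1) W} (h1 : (Lmul α (a + 1)).rTensor _ ω = 0)
    (h2 : (Lmul β (b + 1)).lTensor _ ω = 0) :
    ∃ η : ⋀[ℂ]^a U ⊗[ℂ] ⋀[ℂ]^b W, (Lmul α a).rTensor _ ((Lmul β b).lTensor _ η) = ω := by
  obtain ⟨f, hf⟩ := Module.Projective.exists_dual_eq_one ℂ hα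
  obtain ⟨g, hg⟩ := Module.Projective.exists_dual_eq_one ℂ hβ
  have hU := Lmul_comp_interiorMul_add_interiorMul_comp_Lmul f α a
  have hW := Lmul_comp_interiorMul_add_interiorMul_comp_Lmul g β b
  rw [hf, one_smul] at hU
  rw [hg, one_smul] at hW
  refine ⟨TensorProduct.map (interiorMul f a) (interiorMul g b) ω, ?_⟩
  rw [← LinearMap.comp_apply, LinearMap.rTensor_comp_lTensor]
  exact TensorProduct.map_map_eq_self_of_homotopy hU hW h1 h2

theorem BXcast_BXcast {r s r' s' r'' s'' : ℤ} (h1 : r = r') (h2 : s = s') (h3 : r' = r'')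
    (h4 : s' = s'') (x : BX U W r s) :
    BXcast h3 h4 (BXcast h1 h2 x) = BXcast (h1.trans h3) (h2.trans h4) x := by
  subst h1 h2 h3 h4; rfl

theorem Bd1_BXcast (α : U) {r r' s s' : ℤ} (h1 : r = r') (h2 : s = s') (x : BX U W r s) :
    Bd1 α r' s' (BXcast h1 h2 x) = BXcast (congrArg (· + 1) h1) h2 (Bd1 α r s x) := by
  subst h1 h2; rfl

theorem Bd2u_BXcast (β : W) {r r' s s' : ℤ} (h1 : r = r') (h2 : s = s') (x : BX U W r s) :
    Bd2u β r' s' (BXcast h1 h2 x) = BXcast h1 (congrArg (· + 1) h2) (Bd2u β r s x) := by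
  subst h1 h2; rfl

/-- Exactness of the symbol complex of the Schweitzer complex in the Bott–Chern degree:
if `ω ∈ Λ^a U ⊗ Λ^b W` satisfies `L_α ω = 0` and `L_β ω = 0` (for `α, β` nonzero), then
`ω = L_α L_β η` for some `η ∈ Λ^{a-1} U ⊗ Λ^{b-1} W`. -/
theorem symbol_exact_bott_chern_degree (U W : Type) [AddCommGroup U] [Module ℂ U]
    [AddCommGroup W] [Module ℂ W]
    (α : U) (β : W) (hα : α ≠ 0) (hβ : β ≠ 0) (a b : ℤ) (ha : 0 ≤ a) (hb : 0 ≤ b)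
    (ω : BX U W a b) (h1 : Bd1 α a b ω = 0) (h2 : Bd2u β a b ω = 0) :
    ∃ η : BX U W (a - 1) (b - 1),
      ω = BXcast (show a - 1 + 1 = a by omega) (show b - 1 + 1 = b by omega)
        (Bd1 α (a - 1) (b - 1 + 1) (Bd2u β (a - 1) (b - 1) η)) := by
  lift a to ℕ using ha
  lift b to ℕ using hb
  rcases a with _ | a
  · refine ⟨0, ?_⟩
    rw [map_zero, map_zero, map_zero]
    exact (map_eq_zero_iff _ <| Module.Flat.rTensor_preserves_injective_linearMap _
      (Lmul_zero_injective hα)).mp h1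
  rcases b with _ | b
  · refine ⟨0, ?_⟩
    rw [map_zero, map_zero, map_zero]
    exact (map_eq_zero_iff _ <| Module.Flat.lTensor_preserves_injective_linearMap _
      (Lmul_zero_injective hβ)).mp h2
  obtain ⟨η, hη⟩ : ∃ η : BX U W a b, Bd1 α a (b + 1) (Bd2u β a b η) = ω :=
    exists_rTensor_Lmul_lTensor_Lmul_eq hα hβ a b h1 h2
  refine ⟨BXcast (Int.add_sub_cancel _ 1).symm (Int.add_sub_cancel _ 1).symm η, ?_⟩
  rw [Bd2u_BXcast, Bd1_BXcast, BXcast_BXcast]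
  exact hη.symm
end

section
/- Let U and W be finite-dimensional complex vector spaces, α ∈ U and β ∈ W nonzero, and a, b ≥ 0. If ω₁ ∈ Λ^a U ⊗ Λ^{b+1} W and ω₂ ∈ Λ^{a+1} U ⊗ Λ^b W satisfy L_β ω₁ = 0, L_α ω₂ = 0 and L_α ω₁ = L_β ω₂, then there exists η ∈ Λ^a U ⊗ Λ^b W with ω₁ = L_β η and ω₂ = L_α η. (Exactness of the symbol complex of the Schweitzer complex in the degree just above the corner.) -/
open scoped TensorProduct

variable {U W : Type} [AddCommGroup U] [Module ℂ U] [AddCommGroup W] [Module ℂ W]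

/-!
Choose covectors `d`, `e` with `d α = 1` and `e β = 1`. By Cartan's formula, contraction with `d`
is a contracting homotopy `h` for `α ∧ -`, and contraction with `e` one, `k`, for `β ∧ -`. The
primitive is `η = k ω₁ + h z` with `z = ω₂ - (L_α ⊗ k) ω₁`: since `L_β ω₁ = 0` we get
`L_β (k ω₁) = ω₁`; `z` is killed by `L_α` (as `L_α² = 0`) and by `L_β` (as `L_α ω₁ = L_β ω₂`), so
`L_α (h z) = z` and `L_β (h z) = 0`.
-/

theorem contractLeft_mem_exteriorPower {R M : Type*} [CommRing R] [AddCommGroup M] [Module R M]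
    (d : Module.Dual R M) {n : ℕ} {x : ExteriorAlgebra R M} (hx : x ∈ ⋀[R]^n M) :
    CliffordAlgebra.contractLeft d x ∈ ⋀[R]^(n - 1) M := by
  induction hx using Submodule.pow_induction_on_left' with
  | algebraMap r =>
    rw [CliffordAlgebra.contractLeft_algebraMap]
    exact zero_mem _
  | add x y _ _ _ hx hy => exact map_add (CliffordAlgebra.contractLeft d) x y ▸ add_mem hx hy
  | mem_mul m hm i x hx ih =>
    obtain ⟨u, rfl⟩ := hm
    rw [CliffordAlgebra.contractLeft_ι_mul]
    refine sub_mem (Submodule.smul_mem _ _ hx) ?_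
    cases i with
    | zero =>
      rw [pow_zero] at hx
      obtain ⟨r, rfl⟩ := Submodule.mem_one.mp hx
      rw [CliffordAlgebra.contractLeft_algebraMap, mul_zero]
      exact zero_mem _
    | succ j =>
      rw [Nat.add_sub_cancel] at ih
      rw [Nat.succ_sub_one, ExteriorAlgebra.exteriorPower, pow_succ']
      exact Submodule.mul_mem_mul (LinearMap.mem_range_self _ u) ih

noncomputable def contract (d : Module.Dual ℂ U) (n : ℕ) : ⋀[ℂ]^(n + 1) U →ₗ[ℂ] ⋀[ℂ]^n U :=
  (CliffordAlgebra.contractLeft d).restrict fun _ hx => contractLeft_mem_exteriorPower d hx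

theorem Lmul_comp_Lmul (α : U) (n : ℕ) : Lmul α (n + 1) ∘ₗ Lmul α n = 0 :=
  LinearMap.ext (Lmul_Lmul α n)

-- Cartan's formula `ι_d (α ∧ x) + α ∧ ι_d x = d(α) x`.
theorem Lmul_comp_contract_add_contract_comp_Lmul {α : U} {d : Module.Dual ℂ U} (hd : d α = 1)
    (n : ℕ) : Lmul α n ∘ₗ contract d n + contract d (n + 1) ∘ₗ Lmul α (n + 1) = LinearMap.id := by
  refine LinearMap.ext fun x => Subtype.ext ?_
  change ExteriorAlgebra.ι ℂ α * CliffordAlgebra.contractLeft d (x : ExteriorAlgebra ℂ U)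
      + CliffordAlgebra.contractLeft d (ExteriorAlgebra.ι ℂ α * (x : ExteriorAlgebra ℂ U)) = x
  rw [CliffordAlgebra.contractLeft_ι_mul, hd, one_smul, add_sub_cancel]

section Homotopy

open LinearMap TensorProduct

variable {R A₀ A₁ A₂ B₀ B₁ B₂ : Type*} [CommRing R]
  [AddCommGroup A₀] [Module R A₀] [AddCommGroup A₁] [Module R A₁] [AddCommGroup A₂] [Module R A₂]
  [AddCommGroup B₀] [Module R B₀] [AddCommGroup B₁] [Module R B₁] [AddCommGroup B₂] [Module R B₂]

theorem exists_eq_lTensor_and_eq_rTensor_of_homotopy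
    {f₀ : A₀ →ₗ[R] A₁} {f₁ : A₁ →ₗ[R] A₂} {h₀ : A₁ →ₗ[R] A₀} {h₁ : A₂ →ₗ[R] A₁}
    {g₀ : B₀ →ₗ[R] B₁} {g₁ : B₁ →ₗ[R] B₂} {k₀ : B₁ →ₗ[R] B₀} {k₁ : B₂ →ₗ[R] B₁}
    (hf : f₁ ∘ₗ f₀ = 0) (hh : f₀ ∘ₗ h₀ + h₁ ∘ₗ f₁ = LinearMap.id)
    (hk : g₀ ∘ₗ k₀ + k₁ ∘ₗ g₁ = LinearMap.id)
    {ω₁ : A₀ ⊗[R] B₁} {ω₂ : A₁ ⊗[R] B₀}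
    (h1 : g₁.lTensor A₀ ω₁ = 0) (h2 : f₁.rTensor B₀ ω₂ = 0)
    (h3 : f₀.rTensor B₁ ω₁ = g₀.lTensor A₁ ω₂) :
    ∃ η : A₀ ⊗[R] B₀, ω₁ = g₀.lTensor A₀ η ∧ ω₂ = f₀.rTensor B₀ η := by
  have hω₁ : g₀.lTensor A₀ (k₀.lTensor A₀ ω₁) = ω₁ := by
    simpa [lTensor_add, lTensor_comp, h1] using congr($(hk).lTensor A₀ ω₁)
  set z := ω₂ - map f₀ k₀ ω₁
  have hz₁ : f₁.rTensor B₀ z = 0 := by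
    rw [map_sub, h2, ← rTensor_comp_lTensor, comp_apply, ← comp_apply (f₁.rTensor B₀),
      ← rTensor_comp, hf, rTensor_zero, LinearMap.zero_apply, sub_zero]
  have hz₂ : g₀.lTensor A₁ z = 0 := by
    rw [map_sub, ← h3, ← rTensor_comp_lTensor, comp_apply, ← comp_apply (g₀.lTensor A₁),
      lTensor_comp_rTensor, ← rTensor_comp_lTensor, comp_apply, hω₁, sub_self]
  have hz : f₀.rTensor B₀ (h₀.rTensor B₀ z) = z := by
    simpa [rTensor_add, rTensor_comp, hz₁] using congr($(hh).rTensor B₀ z)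
  refine ⟨k₀.lTensor A₀ ω₁ + h₀.rTensor B₀ z, ?_, ?_⟩
  · rw [map_add, hω₁, ← comp_apply (g₀.lTensor A₀), lTensor_comp_rTensor,
      ← rTensor_comp_lTensor, comp_apply, hz₂, map_zero, add_zero]
  · rw [map_add, hz, ← comp_apply (f₀.rTensor B₀), rTensor_comp_lTensor, add_sub_cancel]

end Homotopy

theorem symbol_exact_above_corner_general (U W : Type) [AddCommGroup U] [Module ℂ U]
    [AddCommGroup W] [Module ℂ W]
    (α : U) (β : W) (hα : α ≠ 0) (hβ : β ≠ 0) (a b : ℤ) (ha : 0 ≤ a) (hb : 0 ≤ b)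
    (ω₁ : BX U W a (b + 1)) (ω₂ : BX U W (a + 1) b)
    (h1 : Bd2u β a (b + 1) ω₁ = 0) (h2 : Bd1 α (a + 1) b ω₂ = 0)
    (h3 : Bd1 α a (b + 1) ω₁ = Bd2u β (a + 1) b ω₂) :
    ∃ η : BX U W a b, ω₁ = Bd2u β a b η ∧ ω₂ = Bd1 α a b η := by
  obtain ⟨m, rfl⟩ := Int.eq_ofNat_of_zero_le ha
  obtain ⟨n, rfl⟩ := Int.eq_ofNat_of_zero_le hb
  obtain ⟨d, hd⟩ := Module.Projective.exists_dual_eq_one ℂ hα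
  obtain ⟨e, he⟩ := Module.Projective.exists_dual_eq_one ℂ hβ
  exact exists_eq_lTensor_and_eq_rTensor_of_homotopy (Lmul_comp_Lmul α m)
    (Lmul_comp_contract_add_contract_comp_Lmul hd m)
    (Lmul_comp_contract_add_contract_comp_Lmul he n) h1 h2 h3

/-- Exactness of the symbol complex of the Schweitzer complex in the degree just above
the corner: if `ω₁ ∈ Λ^a U ⊗ Λ^{b+1} W` and `ω₂ ∈ Λ^{a+1} U ⊗ Λ^b W` satisfy
`L_β ω₁ = 0`, `L_α ω₂ = 0` and `L_α ω₁ = L_β ω₂` (for `α, β` nonzero), then there is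
`η ∈ Λ^a U ⊗ Λ^b W` with `ω₁ = L_β η` and `ω₂ = L_α η`. -/
theorem symbol_exact_above_corner (U W : Type) [AddCommGroup U] [Module ℂ U]
    [AddCommGroup W] [Module ℂ W] [FiniteDimensional ℂ U] [FiniteDimensional ℂ W]
    (α : U) (β : W) (hα : α ≠ 0) (hβ : β ≠ 0) (a b : ℤ) (ha : 0 ≤ a) (hb : 0 ≤ b)
    (ω₁ : BX U W a (b + 1)) (ω₂ : BX U W (a + 1) b)
    (h1 : Bd2u β a (b + 1) ω₁ = 0) (h2 : Bd1 α (a + 1) b ω₂ = 0)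
    (h3 : Bd1 α a (b + 1) ω₁ = Bd2u β (a + 1) b ω₂) :
    ∃ η : BX U W a b, ω₁ = Bd2u β a b η ∧ ω₂ = Bd1 α a b η :=
  symbol_exact_above_corner_general U W α β hα hβ a b ha hb ω₁ ω₂ h1 h2 h3
end

section
/- Let n ≥ 0 and let p, q ≥ 0 be integers with p + q ≤ n. Let h : {0,…,n} × {0,…,n} → ℤ satisfy h(r,s) = h(n−s,n−r) for all r, s. Then Σ_{r=0}^{p−1} Σ_{s=0}^{q−1} (−1)^{r+s} h(r,s) − Σ_{r=p}^{n} Σ_{s=q}^{n} (−1)^{r+s} h(r,s) = Σ_{r=p}^{n−q} Σ_{s=0}^{n} (−1)^{r+s+1} h(r,s). -/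
open Finset

/-- Reindexing a double sum via the bijection `(r,s) ↦ (n-s, n-r)`. -/
lemma schweitzer_reindex (n q : ℕ) (hq : q ≤ n) (F : ℕ → ℕ → ℤ)
    (hF : ∀ r ∈ Finset.Ico (n - q + 1) (n + 1), ∀ s ∈ Finset.Ico q (n + 1),
      F r s = F (n - s) (n - r)) :
    ∑ x ∈ (Finset.Ico (n - q + 1) (n + 1)) ×ˢ (Finset.Ico q (n + 1)), F x.1 x.2
      = ∑ x ∈ (Finset.Ico 0 (n - q + 1)) ×ˢ (Finset.Ico 0 q), F x.1 x.2 := by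
  refine Finset.sum_nbij' (fun x => (n - x.2, n - x.1)) (fun x => (n - x.2, n - x.1))
    ?_ ?_ ?_ ?_ ?_
  · intro a ha
    simp only [Finset.mem_product, Finset.mem_Ico] at ha ⊢
    omega
  · intro a ha
    simp only [Finset.mem_product, Finset.mem_Ico] at ha ⊢
    omega
  · intro a ha
    simp only [Finset.mem_product, Finset.mem_Ico] at ha
    ext <;> simp <;> omega
  · intro a ha
    simp only [Finset.mem_product, Finset.mem_Ico] at ha
    ext <;> simp <;> omega
  · intro a ha
    simp only [Finset.mem_product] at ha
    exact hF a.1 ha.1 a.2 ha.2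

/-- The K-theoretic identity `[L_{p,q}] = Σ_{r=p}^{n-q} (-1)^{r+1} [A^{r,•}]` at the
level of dimensions: if `h : {0,…,n} × {0,…,n} → ℤ` satisfies the symmetry
`h(r,s) = h(n-s,n-r)`, and `p + q ≤ n`, then
`Σ_{r<p} Σ_{s<q} (-1)^{r+s} h(r,s) − Σ_{r=p}^n Σ_{s=q}^n (-1)^{r+s} h(r,s)
  = Σ_{r=p}^{n-q} Σ_{s=0}^n (-1)^{r+s+1} h(r,s)`. -/
theorem schweitzer_k_theory_identity (n p q : ℕ) (hpq : p + q ≤ n)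
    (h : ℕ → ℕ → ℤ) (hsym : ∀ r ≤ n, ∀ s ≤ n, h r s = h (n - s) (n - r)) :
    ∑ r ∈ Finset.range p, ∑ s ∈ Finset.range q, (-1 : ℤ) ^ (r + s) * h r s
      - ∑ r ∈ Finset.Icc p n, ∑ s ∈ Finset.Icc q n, (-1 : ℤ) ^ (r + s) * h r s
    = ∑ r ∈ Finset.Icc p (n - q), ∑ s ∈ Finset.Icc 0 n,
        (-1 : ℤ) ^ (r + s + 1) * h r s := by
  set F : ℕ → ℕ → ℤ := fun r s => (-1) ^ (r + s) * h r s with hFdef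
  -- symmetry for F, including the sign
  have hFsym : ∀ r ≤ n, ∀ s ≤ n, F r s = F (n - s) (n - r) := by
    intro r hr s hs
    simp only [hFdef]
    rw [← hsym r hr s hs]
    congr 1
    rw [neg_one_pow_eq_pow_mod_two, neg_one_pow_eq_pow_mod_two (n := (n - s) + (n - r))]
    congr 1
    omega
  -- rewrite the RHS as a negated sum of F
  have hrhs : ∑ r ∈ Finset.Icc p (n - q), ∑ s ∈ Finset.Icc 0 n,
        (-1 : ℤ) ^ (r + s + 1) * h r s
      = -∑ r ∈ Finset.Icc p (n - q), ∑ s ∈ Finset.Icc 0 n, F r s := by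
    rw [← Finset.sum_neg_distrib]
    refine Finset.sum_congr rfl fun r _ => ?_
    rw [← Finset.sum_neg_distrib]
    refine Finset.sum_congr rfl fun s _ => ?_
    simp only [hFdef, pow_succ]
    ring
  rw [hrhs]
  -- now everything in terms of F; convert Icc/range to Ico
  have hIcc : ∀ a b : ℕ, Finset.Icc a b = Finset.Ico a (b + 1) := fun a b =>
    (Finset.Ico_add_one_right_eq_Icc a b).symm
  simp only [hIcc, ← Finset.range_eq_Ico] at *
  simp only [Finset.range_eq_Ico]
  -- split inner sum of C at q, split outer sum of B at n-q+1
  have splitC : ∀ r, ∑ s ∈ Finset.Ico 0 (n + 1), F r s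
      = ∑ s ∈ Finset.Ico 0 q, F r s + ∑ s ∈ Finset.Ico q (n + 1), F r s := by
    intro r
    rw [Finset.sum_Ico_consecutive _ (Nat.zero_le q) (by omega)]
  have splitB : ∑ r ∈ Finset.Ico p (n + 1), ∑ s ∈ Finset.Ico q (n + 1), F r s
      = ∑ r ∈ Finset.Ico p (n - q + 1), ∑ s ∈ Finset.Ico q (n + 1), F r s
        + ∑ r ∈ Finset.Ico (n - q + 1) (n + 1), ∑ s ∈ Finset.Ico q (n + 1), F r s := by
    rw [Finset.sum_Ico_consecutive _ (by omega : p ≤ n - q + 1) (by omega)]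
  rw [splitB]
  simp only [splitC, Finset.sum_add_distrib]
  -- key reindexing step
  have key : ∑ r ∈ Finset.Ico (n - q + 1) (n + 1), ∑ s ∈ Finset.Ico q (n + 1), F r s
      = ∑ r ∈ Finset.Ico 0 (n - q + 1), ∑ s ∈ Finset.Ico 0 q, F r s := by
    rw [← Finset.sum_product', ← Finset.sum_product']
    refine schweitzer_reindex n q (by omega) F ?_
    intro r hr s hs
    simp only [Finset.mem_Ico] at hr hs
    exact hFsym r (by omega) s (by omega)
  rw [key]
  have splitA : ∑ r ∈ Finset.Ico 0 (n - q + 1), ∑ s ∈ Finset.Ico 0 q, F r s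
      = ∑ r ∈ Finset.Ico 0 p, ∑ s ∈ Finset.Ico 0 q, F r s
        + ∑ r ∈ Finset.Ico p (n - q + 1), ∑ s ∈ Finset.Ico 0 q, F r s := by
    rw [Finset.sum_Ico_consecutive _ (Nat.zero_le p) (by omega)]
  rw [splitA]
  ring
end
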